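/- arXiv:2604.15586 — 6 statements merged into one kernel-verified Lean document; each statement's English description precedes it below -/
import Mathlib

section
/- Let P ∈ 𝕊^q_{++} and R ∈ 𝕊^r_{++}. Suppose there exists α ∈ ℝ^K with α_k ≥ 0 for all k such that the block-diagonal matrix diag(α_1 Q_1⁻¹, …, α_K Q_K⁻¹) − Fᵀ P F is positive semidefinite, where F := [F_1 F_2 ⋯ F_K], and R − Σ_{k=1}^K α_k G_kᵀ R_k G_k is positive semidefinite. Then with Q := P⁻¹ one has E⁰(Q,R) ⊇ T⁰. -/
open Matrix

/-- The origin-centered matrix ellipsoid `E⁰(Q,R) = {X | Xᵀ Q⁻¹ X ⪯ R}` (Loewner order). -/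
def matrixEllipsoid0 {q r : ℕ} (Q : Matrix (Fin q) (Fin q) ℝ)
    (R : Matrix (Fin r) (Fin r) ℝ) : Set (Matrix (Fin q) (Fin r) ℝ) :=
  {X | (R - Xᵀ * Q⁻¹ * X).PosSemidef}

/-- The Minkowski sum `T⁰ = ⊕_{k} F_k E⁰(Q_k,R_k) G_k`. -/
def minkowskiSum {q r K : ℕ} {qd rd : Fin K → ℕ}
    (Qk : ∀ k, Matrix (Fin (qd k)) (Fin (qd k)) ℝ)
    (Rk : ∀ k, Matrix (Fin (rd k)) (Fin (rd k)) ℝ)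
    (Fk : ∀ k, Matrix (Fin q) (Fin (qd k)) ℝ)
    (Gk : ∀ k, Matrix (Fin (rd k)) (Fin r) ℝ) : Set (Matrix (Fin q) (Fin r) ℝ) :=
  {Y | ∃ X : ∀ k, Matrix (Fin (qd k)) (Fin (rd k)) ℝ,
    (∀ k, X k ∈ matrixEllipsoid0 (Qk k) (Rk k)) ∧ Y = ∑ k, Fk k * X k * Gk k}

/-- The concatenated matrix `F = [F_1 F_2 ⋯ F_K]`. -/
def concatF {q K : ℕ} {qd : Fin K → ℕ} (Fk : ∀ k, Matrix (Fin q) (Fin (qd k)) ℝ) :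
    Matrix (Fin q) ((k : Fin K) × Fin (qd k)) ℝ :=
  Matrix.of fun i j => Fk j.1 i j.2

lemma sigma_sum_eq {K : ℕ} {qd : Fin K → ℕ} (g : ((k : Fin K) × Fin (qd k)) → ℝ) :
    ∑ p, g p = ∑ k, ∑ a, g ⟨k, a⟩ := by
  rw [← Finset.univ_sigma_univ, Finset.sum_sigma]

lemma psd_smul {n : ℕ} {c : ℝ} {M : Matrix (Fin n) (Fin n) ℝ} (hc : 0 ≤ c)
    (hM : M.PosSemidef) : (c • M).PosSemidef := by
  refine ⟨?_, fun x => ?_⟩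
  · unfold Matrix.IsHermitian
    rw [conjTranspose_smul, hM.1]
    simp
  · exact (hM.smul hc).2 x

lemma psd_conj {m n : Type*} [Fintype m] [Fintype n] {M : Matrix m m ℝ}
    (hM : M.PosSemidef) (B : Matrix m n ℝ) : (Bᵀ * M * B).PosSemidef := by
  have := hM.conjTranspose_mul_mul_same B
  rwa [conjTranspose_eq_transpose_of_trivial] at this

lemma stack_conj {K r : ℕ} {qd : Fin K → ℕ} (M : ∀ k, Matrix (Fin (qd k)) (Fin (qd k)) ℝ)
    (W : ∀ k, Matrix (Fin (qd k)) (Fin r) ℝ) :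
    (Matrix.of fun (p : (k : Fin K) × Fin (qd k)) j => W p.1 p.2 j :
        Matrix ((k : Fin K) × Fin (qd k)) (Fin r) ℝ)ᵀ *
      Matrix.blockDiagonal' M * (Matrix.of fun (p : (k : Fin K) × Fin (qd k)) j => W p.1 p.2 j :
        Matrix ((k : Fin K) × Fin (qd k)) (Fin r) ℝ) =
    ∑ k, (W k)ᵀ * M k * (W k) := by
  ext i j
  simp only [mul_apply, transpose_apply, Matrix.sum_apply, of_apply]
  rw [sigma_sum_eq]
  apply Finset.sum_congr rfl
  intro k _
  apply Finset.sum_congr rfl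
  intro b _
  congr 1
  rw [sigma_sum_eq]
  rw [Finset.sum_eq_single k]
  · apply Finset.sum_congr rfl
    intro a _
    rw [blockDiagonal'_apply_eq]
  · intro k' _ hk'
    apply Finset.sum_eq_zero
    intro a _
    rw [blockDiagonal'_apply_ne _ _ _ hk', mul_zero]
  · simp

lemma concat_mul {q r K : ℕ} {qd : Fin K → ℕ} (Fk : ∀ k, Matrix (Fin q) (Fin (qd k)) ℝ)
    (W : ∀ k, Matrix (Fin (qd k)) (Fin r) ℝ) :
    concatF Fk * (Matrix.of fun (p : (k : Fin K) × Fin (qd k)) j => W p.1 p.2 j :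
      Matrix ((k : Fin K) × Fin (qd k)) (Fin r) ℝ) = ∑ k, Fk k * W k := by
  ext i j
  simp only [concatF, mul_apply, Matrix.sum_apply, of_apply]
  rw [sigma_sum_eq]

/-- Proposition 2: LMI sufficient conditions for the outer approximation:
if `diag(α_k Q_k⁻¹) − Fᵀ P F ⪰ 0` and `R − Σ_k α_k G_kᵀ R_k G_k ⪰ 0` for some `α ≥ 0`,
then with `Q = P⁻¹` one has `E⁰(Q,R) ⊇ T⁰`. -/
theorem minkowskiSum_subset_of_LMI {q r K : ℕ} {qd rd : Fin K → ℕ}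
    (Qk : ∀ k, Matrix (Fin (qd k)) (Fin (qd k)) ℝ)
    (Rk : ∀ k, Matrix (Fin (rd k)) (Fin (rd k)) ℝ)
    (hQk : ∀ k, (Qk k).PosDef) (hRk : ∀ k, (Rk k).PosDef)
    (Fk : ∀ k, Matrix (Fin q) (Fin (qd k)) ℝ)
    (Gk : ∀ k, Matrix (Fin (rd k)) (Fin r) ℝ)
    (P : Matrix (Fin q) (Fin q) ℝ) (R : Matrix (Fin r) (Fin r) ℝ)
    (hP : P.PosDef) (hR : R.PosDef)
    (α : Fin K → ℝ) (hα : ∀ k, 0 ≤ α k)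
    (h1 : (Matrix.blockDiagonal' (fun k => α k • (Qk k)⁻¹) -
      (concatF Fk)ᵀ * P * concatF Fk).PosSemidef)
    (h2 : (R - ∑ k, α k • ((Gk k)ᵀ * Rk k * Gk k)).PosSemidef) :
    minkowskiSum Qk Rk Fk Gk ⊆ matrixEllipsoid0 P⁻¹ R := by
  intro Y hY
  obtain ⟨X, hX, rfl⟩ := hY
  have hPinv : P⁻¹⁻¹ = P :=
    Matrix.nonsing_inv_nonsing_inv _ (isUnit_iff_ne_zero.mpr hP.det_pos.ne')
  simp only [matrixEllipsoid0, Set.mem_setOf_eq, hPinv]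
  -- the stacked matrix
  set W : ∀ k, Matrix (Fin (qd k)) (Fin r) ℝ := fun k => X k * Gk k with hWdef
  set Z : Matrix ((k : Fin K) × Fin (qd k)) (Fin r) ℝ :=
    Matrix.of fun p j => W p.1 p.2 j with hZdef
  have hFZ : concatF Fk * Z = ∑ k, Fk k * X k * Gk k := by
    rw [concat_mul]
    exact Finset.sum_congr rfl fun k _ => by simp only [hWdef]; rw [Matrix.mul_assoc]
  have hDZ : Zᵀ * Matrix.blockDiagonal' (fun k => α k • (Qk k)⁻¹) * Z =
      ∑ k, α k • ((Gk k)ᵀ * ((X k)ᵀ * (Qk k)⁻¹ * X k) * Gk k) := by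
    rw [stack_conj]
    refine Finset.sum_congr rfl fun k _ => ?_
    simp only [hWdef, transpose_mul, Matrix.mul_smul, Matrix.smul_mul, Matrix.mul_assoc]
  have key : R - (∑ k, Fk k * X k * Gk k)ᵀ * P * (∑ k, Fk k * X k * Gk k) =
      (R - ∑ k, α k • ((Gk k)ᵀ * Rk k * Gk k)) +
      (∑ k, α k • ((Gk k)ᵀ * (Rk k - (X k)ᵀ * (Qk k)⁻¹ * X k) * Gk k)) +
      Zᵀ * (Matrix.blockDiagonal' (fun k => α k • (Qk k)⁻¹) -
        (concatF Fk)ᵀ * P * concatF Fk) * Z := by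
    have hmid : (∑ k, α k • ((Gk k)ᵀ * (Rk k - (X k)ᵀ * (Qk k)⁻¹ * X k) * Gk k)) =
        (∑ k, α k • ((Gk k)ᵀ * Rk k * Gk k)) -
        (∑ k, α k • ((Gk k)ᵀ * ((X k)ᵀ * (Qk k)⁻¹ * X k) * Gk k)) := by
      rw [← Finset.sum_sub_distrib]
      refine Finset.sum_congr rfl fun k _ => ?_
      rw [Matrix.mul_sub, Matrix.sub_mul, smul_sub]
    have hlast : Zᵀ * (Matrix.blockDiagonal' (fun k => α k • (Qk k)⁻¹) -
        (concatF Fk)ᵀ * P * concatF Fk) * Z =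
        (∑ k, α k • ((Gk k)ᵀ * ((X k)ᵀ * (Qk k)⁻¹ * X k) * Gk k)) -
        (∑ k, Fk k * X k * Gk k)ᵀ * P * (∑ k, Fk k * X k * Gk k) := by
      rw [Matrix.mul_sub, Matrix.sub_mul, hDZ, ← hFZ]
      congr 1
      rw [transpose_mul]
      simp only [Matrix.mul_assoc]
    rw [hmid, hlast]
    abel
  rw [key]
  refine (h2.add ?_).add (psd_conj h1 Z)
  refine Finset.sum_induction _ _ (fun a b ha hb => ha.add hb) Matrix.PosSemidef.zero
    fun k _ => psd_smul (hα k) (psd_conj (hX k) (Gk k))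
end

section
/- Suppose Assumption 1 holds. Let P ∈ 𝕊^q_{++}, R ∈ 𝕊^r_{++}, and α ∈ ℝ^K with α_k ≥ 0 for all k be such that diag(α_1 Q_1⁻¹, …, α_K Q_K⁻¹) − Fᵀ P F ⪰ 0 and R − Σ_{k=1}^K α_k G_kᵀ R_k G_k ⪰ 0. Then α_k > 0 for every k, and Q := P⁻¹ satisfies Q − Σ_{k=1}^K (1/α_k) F_k Q_k F_kᵀ ⪰ 0. -/
open Matrix

/-- The stacked matrix `G = [G_1ᵀ G_2ᵀ ⋯ G_Kᵀ]ᵀ`. -/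
def concatG {r K : ℕ} {rd : Fin K → ℕ} (Gk : ∀ k, Matrix (Fin (rd k)) (Fin r) ℝ) :
    Matrix ((k : Fin K) × Fin (rd k)) (Fin r) ℝ :=
  Matrix.of fun j i => Gk j.1 j.2 i

section Aux

variable {q K : ℕ} {qd : Fin K → ℕ}

lemma blockDiagonal'_mulVec_aux (M : ∀ k : Fin K, Matrix (Fin (qd k)) (Fin (qd k)) ℝ)
    (x : ((k : Fin K) × Fin (qd k)) → ℝ) (k : Fin K) (a : Fin (qd k)) :
    (blockDiagonal' M *ᵥ x) ⟨k, a⟩ = (M k *ᵥ fun b => x ⟨k, b⟩) a := by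
  simp only [mulVec, dotProduct]
  rw [← Finset.univ_sigma_univ, Finset.sum_sigma]
  rw [Finset.sum_eq_single k]
  · simp [blockDiagonal'_apply_eq]
  · intro l _ hl
    simp [blockDiagonal'_apply_ne _ _ _ (Ne.symm hl)]
  · simp

lemma posDef_smul_aux {n : ℕ} {M : Matrix (Fin n) (Fin n) ℝ} (hM : M.PosDef) {c : ℝ}
    (hc : 0 < c) : (c • M).PosDef := by
  refine Matrix.PosDef.of_dotProduct_mulVec_pos ?_ (fun x hx => ?_)
  · have := hM.1
    unfold Matrix.IsHermitian at *
    rw [conjTranspose_smul, this]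
    simp
  · have h := hM.dotProduct_mulVec_pos hx
    simp only [smul_mulVec, dotProduct_smul, smul_eq_mul]
    positivity

lemma blockDiagonal'_posDef_aux {M : ∀ k : Fin K, Matrix (Fin (qd k)) (Fin (qd k)) ℝ}
    (hM : ∀ k, (M k).PosDef) : (Matrix.blockDiagonal' M).PosDef := by
  refine Matrix.PosDef.of_dotProduct_mulVec_pos ?_ (fun x hx => ?_)
  · rw [Matrix.IsHermitian, Matrix.blockDiagonal'_conjTranspose]
    exact congrArg _ (funext fun k => (hM k).1)
  · have hsum : star x ⬝ᵥ blockDiagonal' M *ᵥ x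
        = ∑ k, star (fun b => x ⟨k, b⟩) ⬝ᵥ M k *ᵥ (fun b => x ⟨k, b⟩) := by
      simp only [dotProduct, star_trivial]
      rw [← Finset.univ_sigma_univ, Finset.sum_sigma]
      refine Finset.sum_congr rfl fun k _ => Finset.sum_congr rfl fun a _ => ?_
      rw [blockDiagonal'_mulVec_aux]
    rw [hsum]
    have hex : ∃ k, (fun b => x ⟨k, b⟩) ≠ 0 := by
      by_contra h
      push_neg at h
      apply hx
      funext s
      exact congrFun (h s.1) s.2
    obtain ⟨k0, hk0⟩ := hex
    have : ∀ k ∈ Finset.univ, (0:ℝ) ≤ star (fun b => x ⟨k, b⟩) ⬝ᵥ M k *ᵥ (fun b => x ⟨k, b⟩) :=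
      fun k _ => (hM k).posSemidef.dotProduct_mulVec_nonneg _
    refine lt_of_lt_of_le ((hM k0).dotProduct_mulVec_pos hk0) ?_
    exact Finset.single_le_sum this (Finset.mem_univ k0)

lemma concatF_mul_blockDiagonal'_aux (Fk : ∀ k, Matrix (Fin q) (Fin (qd k)) ℝ)
    (N : ∀ k : Fin K, Matrix (Fin (qd k)) (Fin (qd k)) ℝ) :
    concatF Fk * blockDiagonal' N = concatF (fun k => Fk k * N k) := by
  ext i ⟨l, b⟩
  simp only [mul_apply, concatF, of_apply]
  rw [← Finset.univ_sigma_univ, Finset.sum_sigma]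
  rw [Finset.sum_eq_single l]
  · simp [blockDiagonal'_apply_eq, mul_apply]
  · intro k _ hk
    simp [blockDiagonal'_apply_ne _ _ _ hk]
  · simp

lemma concatF_mul_transpose_aux (A B : ∀ k, Matrix (Fin q) (Fin (qd k)) ℝ) :
    concatF A * (concatF B)ᵀ = ∑ k, A k * (B k)ᵀ := by
  ext i j
  simp only [mul_apply, transpose_apply, concatF, of_apply, Matrix.sum_apply]
  rw [← Finset.univ_sigma_univ, Finset.sum_sigma]

end Aux

/-- Corollary 1, first part: under Assumption 1, if the LMIs
`diag(α_k Q_k⁻¹) − Fᵀ P F ⪰ 0` and `R − Σ_k α_k G_kᵀ R_k G_k ⪰ 0` hold with `α ≥ 0`,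
then every `α_k > 0` and `Q = P⁻¹` satisfies `Q − Σ_k (1/α_k) F_k Q_k F_kᵀ ⪰ 0`. -/
theorem pos_alpha_and_Q_bound_of_LMI {q r K : ℕ} {qd rd : Fin K → ℕ}
    (Qk : ∀ k, Matrix (Fin (qd k)) (Fin (qd k)) ℝ)
    (Rk : ∀ k, Matrix (Fin (rd k)) (Fin (rd k)) ℝ)
    (hQk : ∀ k, (Qk k).PosDef) (hRk : ∀ k, (Rk k).PosDef)
    (Fk : ∀ k, Matrix (Fin q) (Fin (qd k)) ℝ)
    (Gk : ∀ k, Matrix (Fin (rd k)) (Fin r) ℝ)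
    -- Assumption 1
    (hFk : ∀ k, Fk k ≠ 0) (hGk : ∀ k, Gk k ≠ 0)
    (hF : (concatF Fk).rank = q) (hG : (concatG Gk).rank = r)
    (P : Matrix (Fin q) (Fin q) ℝ) (R : Matrix (Fin r) (Fin r) ℝ)
    (hP : P.PosDef) (hR : R.PosDef)
    (α : Fin K → ℝ) (hα : ∀ k, 0 ≤ α k)
    (h1 : (Matrix.blockDiagonal' (fun k => α k • (Qk k)⁻¹) -
      (concatF Fk)ᵀ * P * concatF Fk).PosSemidef)
    (h2 : (R - ∑ k, α k • ((Gk k)ᵀ * Rk k * Gk k)).PosSemidef) :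
    (∀ k, 0 < α k) ∧
      (P⁻¹ - ∑ k, (α k)⁻¹ • (Fk k * Qk k * (Fk k)ᵀ)).PosSemidef := by
  -- Part 1: each α k is positive
  have hαpos : ∀ k, 0 < α k := by
    intro k
    rcases (hα k).lt_or_eq with h | h
    · exact h
    exfalso
    -- restrict h1 to block k
    have hsub := h1.submatrix (Sigma.mk k)
    have heq : (Matrix.blockDiagonal' (fun k => α k • (Qk k)⁻¹) -
        (concatF Fk)ᵀ * P * concatF Fk).submatrix (Sigma.mk k) (Sigma.mk k)
        = α k • (Qk k)⁻¹ - (Fk k)ᵀ * P * Fk k := by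
      ext a b
      simp only [submatrix_apply, Matrix.sub_apply, blockDiagonal'_apply_eq, Matrix.smul_apply, smul_eq_mul,
        mul_apply, transpose_apply, concatF, of_apply]
    rw [heq, ← h] at hsub
    -- quadratic form vanishes, so Fk k *ᵥ v = 0 for all v
    have hFv : ∀ v : Fin (qd k) → ℝ, Fk k *ᵥ v = 0 := by
      intro v
      by_contra hv
      have h1v := hsub.dotProduct_mulVec_nonneg v
      simp only [star_trivial, zero_smul, zero_sub, Matrix.neg_mulVec, dotProduct_neg] at h1v
      rw [Matrix.mul_assoc, ← mulVec_mulVec, ← mulVec_mulVec, dotProduct_mulVec,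
        vecMul_transpose] at h1v
      have hpos := hP.dotProduct_mulVec_pos hv
      simp only [star_trivial] at hpos
      linarith
    apply hFk k
    ext i j
    have := congrFun (hFv (Pi.single j 1)) i
    simpa [mulVec_single] using this
  refine ⟨hαpos, ?_⟩
  -- Part 2
  set D := Matrix.blockDiagonal' (fun k => α k • (Qk k)⁻¹) with hD_def
  have hDk : ∀ k, (α k • (Qk k)⁻¹).PosDef := fun k =>
    posDef_smul_aux (hQk k).inv (hαpos k)
  have hD : D.PosDef := blockDiagonal'_posDef_aux hDk
  haveI : Invertible D := hD.isUnit.invertible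
  haveI : Invertible P⁻¹ := hP.inv.isUnit.invertible
  -- Schur complement: build the block matrix
  have hPinvinv : (P⁻¹)⁻¹ = P := Matrix.nonsing_inv_nonsing_inv P hP.det_pos.ne'.isUnit
  have hct : (concatF Fk)ᴴ = (concatF Fk)ᵀ := conjTranspose_eq_transpose_of_trivial _
  have hblocks : (fromBlocks P⁻¹ (concatF Fk) (concatF Fk)ᴴ D).PosSemidef := by
    rw [Matrix.PosDef.fromBlocks₁₁ _ _ hP.inv, hPinvinv, hct]
    exact h1
  have hschur : (P⁻¹ - concatF Fk * D⁻¹ * (concatF Fk)ᴴ).PosSemidef :=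
    (Matrix.PosDef.fromBlocks₂₂ _ _ hD).mp hblocks
  -- compute D⁻¹
  have hDinv : D⁻¹ = Matrix.blockDiagonal' (fun k => (α k)⁻¹ • Qk k) := by
    apply Matrix.inv_eq_right_inv
    have hblock : ∀ k, (α k • (Qk k)⁻¹) * ((α k)⁻¹ • Qk k) = 1 := by
      intro k
      rw [Matrix.smul_mul, Matrix.mul_smul, smul_smul, mul_inv_cancel₀ (hαpos k).ne',
        one_smul, Matrix.nonsing_inv_mul _ (hQk k).det_pos.ne'.isUnit]
    rw [hD_def, ← Matrix.blockDiagonal'_mul]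
    simp only [hblock]
    exact Matrix.blockDiagonal'_one
  -- compute the sandwich
  have hsand : concatF Fk * D⁻¹ * (concatF Fk)ᵀ
      = ∑ k, (α k)⁻¹ • (Fk k * Qk k * (Fk k)ᵀ) := by
    rw [hDinv, concatF_mul_blockDiagonal'_aux, concatF_mul_transpose_aux]
    refine Finset.sum_congr rfl fun k _ => ?_
    rw [Matrix.mul_smul, Matrix.smul_mul]
  rw [hct, hsand] at hschur
  exact hschur
end

section
/- Suppose Assumption 1 holds. Let Q ∈ 𝕊^q and R ∈ 𝕊^r be symmetric matrices and α ∈ ℝ^K with α_k > 0 for all k be such that Q − Σ_{k=1}^K (1/α_k) F_k Q_k F_kᵀ ⪰ 0 and R − Σ_{k=1}^K α_k G_kᵀ R_k G_k ⪰ 0. Then Q is positive definite, R is positive definite, and P := Q⁻¹ satisfies diag(α_1 Q_1⁻¹, …, α_K Q_K⁻¹) − Fᵀ P F ⪰ 0. -/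
open Matrix

/-- A matrix with full column rank has injective `mulVec`. -/
lemma auxInj {ι : Type*} [Fintype ι] {n : ℕ} (A : Matrix ι (Fin n) ℝ)
    (h : A.rank = n) : Function.Injective A.mulVec := by
  have hk : LinearMap.ker A.mulVecLin = ⊥ := by
    have h1 := A.mulVecLin.finrank_range_add_finrank_ker
    rw [Module.finrank_pi, Fintype.card_fin] at h1
    rw [Matrix.rank] at h
    have : Module.finrank ℝ (LinearMap.ker A.mulVecLin) = 0 := by omega
    exact Submodule.finrank_eq_zero.mp this
  have := LinearMap.ker_eq_bot.mp hk
  exact this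

lemma auxQuad {q : ℕ} {m : Type*} [Fintype m] (F : Matrix (Fin q) m ℝ) (M : Matrix m m ℝ)
    (x : Fin q → ℝ) :
    x ⬝ᵥ (F * M * Fᵀ) *ᵥ x = (Fᵀ *ᵥ x) ⬝ᵥ M *ᵥ (Fᵀ *ᵥ x) := by
  rw [← mulVec_mulVec, ← mulVec_mulVec, dotProduct_mulVec x, ← mulVec_transpose]

lemma auxSmulPSD {n : Type*} [Fintype n] {A : Matrix n n ℝ} (hA : A.PosSemidef) {c : ℝ}
    (hc : 0 ≤ c) : (c • A).PosSemidef := by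
  refine posSemidef_iff_dotProduct_mulVec.mpr ⟨?_, fun x => ?_⟩
  · simpa [Matrix.IsHermitian, conjTranspose_smul] using congrArg (c • ·) hA.1
  · rw [smul_mulVec, dotProduct_smul]
    exact mul_nonneg hc (by simpa using hA.dotProduct_mulVec_nonneg x)

lemma auxSumMulVec {ι m n : Type*} [Fintype ι] [Fintype n] (f : ι → Matrix m n ℝ)
    (x : n → ℝ) : (∑ i, f i) *ᵥ x = ∑ i, f i *ᵥ x := by
  ext j
  simp only [mulVec, dotProduct, Matrix.sum_apply, Finset.sum_mul, Finset.sum_apply]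
  exact Finset.sum_comm

lemma auxDotSum {ι n : Type*} [Fintype ι] [Fintype n] (x : n → ℝ) (v : ι → n → ℝ) :
    x ⬝ᵥ ∑ i, v i = ∑ i, x ⬝ᵥ v i := by
  simp only [dotProduct, Finset.sum_apply, Finset.mul_sum]
  exact Finset.sum_comm

lemma auxSumQuad {ι n : Type*} [Fintype ι] [Fintype n] (f : ι → Matrix n n ℝ)
    (x : n → ℝ) : x ⬝ᵥ (∑ i, f i) *ᵥ x = ∑ i, x ⬝ᵥ f i *ᵥ x := by
  rw [auxSumMulVec, auxDotSum]

lemma auxSumPSD {n ι : Type*} [Fintype n] [Fintype ι] (f : ι → Matrix n n ℝ)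
    (h : ∀ i, (f i).PosSemidef) : (∑ i, f i).PosSemidef := by
  refine posSemidef_iff_dotProduct_mulVec.mpr ⟨?_, fun x => ?_⟩
  · simp only [Matrix.IsHermitian, conjTranspose_sum]
    exact Finset.sum_congr rfl fun i _ => (h i).1
  · simp only [star_trivial]
    rw [auxSumQuad]
    exact Finset.sum_nonneg fun i _ => by simpa using (h i).dotProduct_mulVec_nonneg x

lemma auxBDmulVec {K : ℕ} {qd : Fin K → ℕ} (M : ∀ k, Matrix (Fin (qd k)) (Fin (qd k)) ℝ)
    (x : ((k : Fin K) × Fin (qd k)) → ℝ) (s : (k : Fin K) × Fin (qd k)) :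
    (blockDiagonal' M *ᵥ x) s = (M s.1 *ᵥ fun b => x ⟨s.1, b⟩) s.2 := by
  obtain ⟨k, a⟩ := s
  rw [mulVec, dotProduct, ← Finset.univ_sigma_univ, Finset.sum_sigma]
  rw [Finset.sum_eq_single k]
  · simp [mulVec, dotProduct, blockDiagonal'_apply_eq]
  · intro k' _ hk'
    exact Finset.sum_eq_zero fun b _ => by
      rw [blockDiagonal'_apply_ne _ _ _ (Ne.symm hk'), zero_mul]
  · simp

lemma auxBDquad {K : ℕ} {qd : Fin K → ℕ} (M : ∀ k, Matrix (Fin (qd k)) (Fin (qd k)) ℝ)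
    (x : ((k : Fin K) × Fin (qd k)) → ℝ) :
    x ⬝ᵥ (blockDiagonal' M *ᵥ x) =
      ∑ k, (fun b => x ⟨k, b⟩) ⬝ᵥ (M k *ᵥ fun b => x ⟨k, b⟩) := by
  rw [dotProduct, ← Finset.univ_sigma_univ, Finset.sum_sigma]
  refine Finset.sum_congr rfl fun k _ => Finset.sum_congr rfl fun b _ => ?_
  rw [auxBDmulVec]

lemma auxBDposDef {K : ℕ} {qd : Fin K → ℕ} (M : ∀ k, Matrix (Fin (qd k)) (Fin (qd k)) ℝ)
    (hM : ∀ k, (M k).PosDef) : (blockDiagonal' M).PosDef := by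
  refine posDef_iff_dotProduct_mulVec.mpr ⟨?_, fun x hx => ?_⟩
  · rw [Matrix.IsHermitian, conjTranspose_eq_transpose_of_trivial, blockDiagonal'_transpose]
    have : (fun k => (M k)ᵀ) = M := funext fun k => by
      simpa [Matrix.IsHermitian, conjTranspose_eq_transpose_of_trivial] using (hM k).1
    rw [this]
  · have hx' : ∃ s : (k : Fin K) × Fin (qd k), x s ≠ 0 := by
      by_contra h
      push_neg at h
      exact hx (funext h)
    obtain ⟨⟨k, a⟩, hs⟩ := hx'
    simp only [star_trivial] at *
    rw [auxBDquad]
    refine Finset.sum_pos' (fun k' _ => by simpa using (hM k').posSemidef.dotProduct_mulVec_nonneg _)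
      ⟨k, Finset.mem_univ k, ?_⟩
    have : (fun b => x ⟨k, b⟩) ≠ 0 := fun h => hs (congrFun h a)
    simpa using (hM k).dotProduct_mulVec_pos this

lemma concatF_transpose_mulVec {q K : ℕ} {qd : Fin K → ℕ}
    (Fk : ∀ k, Matrix (Fin q) (Fin (qd k)) ℝ) (x : Fin q → ℝ) (s : (k : Fin K) × Fin (qd k)) :
    ((concatF Fk)ᵀ *ᵥ x) s = ((Fk s.1)ᵀ *ᵥ x) s.2 := rfl

lemma concatG_mulVec {r K : ℕ} {rd : Fin K → ℕ}
    (Gk : ∀ k, Matrix (Fin (rd k)) (Fin r) ℝ) (x : Fin r → ℝ) (s : (k : Fin K) × Fin (rd k)) :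
    (concatG Gk *ᵥ x) s = (Gk s.1 *ᵥ x) s.2 := rfl

lemma concat_mul_blockDiag {q K : ℕ} {qd : Fin K → ℕ}
    (Fk : ∀ k, Matrix (Fin q) (Fin (qd k)) ℝ)
    (M : ∀ k, Matrix (Fin (qd k)) (Fin (qd k)) ℝ) :
    concatF Fk * blockDiagonal' M * (concatF Fk)ᵀ = ∑ k, Fk k * M k * (Fk k)ᵀ := by
  ext i j
  rw [Matrix.sum_apply, mul_apply, ← Finset.univ_sigma_univ, Finset.sum_sigma]
  refine Finset.sum_congr rfl fun k _ => ?_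
  rw [mul_apply (M := Fk k * M k)]
  refine Finset.sum_congr rfl fun b _ => ?_
  have h1 : (concatF Fk)ᵀ ⟨k, b⟩ j = (Fk k)ᵀ b j := rfl
  rw [h1]
  congr 1
  rw [mul_apply, mul_apply, ← Finset.univ_sigma_univ, Finset.sum_sigma]
  rw [Finset.sum_eq_single k]
  · exact Finset.sum_congr rfl fun a _ => by rw [blockDiagonal'_apply_eq]; rfl
  · intro k' _ hk'
    exact Finset.sum_eq_zero fun a _ => by rw [blockDiagonal'_apply_ne _ _ _ hk', mul_zero]
  · simp

/-- Corollary 1, second part: under Assumption 1, if symmetric `Q`, `R` satisfy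
`Q − Σ_k (1/α_k) F_k Q_k F_kᵀ ⪰ 0` and `R − Σ_k α_k G_kᵀ R_k G_k ⪰ 0` with `α > 0`, then
`Q ≻ 0`, `R ≻ 0`, and `P = Q⁻¹` satisfies `diag(α_k Q_k⁻¹) − Fᵀ P F ⪰ 0`. -/
theorem posDef_and_LMI_of_Q_bound {q r K : ℕ} {qd rd : Fin K → ℕ}
    (Qk : ∀ k, Matrix (Fin (qd k)) (Fin (qd k)) ℝ)
    (Rk : ∀ k, Matrix (Fin (rd k)) (Fin (rd k)) ℝ)
    (hQk : ∀ k, (Qk k).PosDef) (hRk : ∀ k, (Rk k).PosDef)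
    (Fk : ∀ k, Matrix (Fin q) (Fin (qd k)) ℝ)
    (Gk : ∀ k, Matrix (Fin (rd k)) (Fin r) ℝ)
    -- Assumption 1
    (hFk : ∀ k, Fk k ≠ 0) (hGk : ∀ k, Gk k ≠ 0)
    (hF : (concatF Fk).rank = q) (hG : (concatG Gk).rank = r)
    (Q : Matrix (Fin q) (Fin q) ℝ) (R : Matrix (Fin r) (Fin r) ℝ)
    (hQsymm : Q.IsSymm) (hRsymm : R.IsSymm)
    (α : Fin K → ℝ) (hα : ∀ k, 0 < α k)
    (h1 : (Q - ∑ k, (α k)⁻¹ • (Fk k * Qk k * (Fk k)ᵀ)).PosSemidef)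
    (h2 : (R - ∑ k, α k • ((Gk k)ᵀ * Rk k * Gk k)).PosSemidef) :
    Q.PosDef ∧ R.PosDef ∧
      (Matrix.blockDiagonal' (fun k => α k • (Qk k)⁻¹) -
        (concatF Fk)ᵀ * Q⁻¹ * concatF Fk).PosSemidef := by
  -- injectivity from rank assumptions
  have hFinj : Function.Injective ((concatF Fk)ᵀ).mulVec :=
    auxInj _ (by rw [Matrix.rank_transpose]; exact hF)
  have hGinj : Function.Injective (concatG Gk).mulVec := auxInj _ hG
  -- positive definiteness of the two sums
  have hSpsd : ∀ k, ((α k)⁻¹ • (Fk k * Qk k * (Fk k)ᵀ)).PosSemidef := fun k => by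
    have h := (hQk k).posSemidef.mul_mul_conjTranspose_same (Fk k)
    rw [conjTranspose_eq_transpose_of_trivial] at h
    exact auxSmulPSD h (inv_nonneg.mpr (hα k).le)
  have hSpd : (∑ k, (α k)⁻¹ • (Fk k * Qk k * (Fk k)ᵀ)).PosDef := by
    refine posDef_iff_dotProduct_mulVec.mpr ⟨(auxSumPSD _ hSpsd).1, fun x hx => ?_⟩
    simp only [star_trivial]
    have hquad : x ⬝ᵥ (∑ k, (α k)⁻¹ • (Fk k * Qk k * (Fk k)ᵀ)) *ᵥ x =
        ∑ k, (α k)⁻¹ * (((Fk k)ᵀ *ᵥ x) ⬝ᵥ Qk k *ᵥ ((Fk k)ᵀ *ᵥ x)) := by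
      rw [auxSumQuad]
      refine Finset.sum_congr rfl fun k _ => ?_
      rw [smul_mulVec, dotProduct_smul, smul_eq_mul, auxQuad]
    rw [hquad]
    have hFx : (concatF Fk)ᵀ *ᵥ x ≠ 0 := fun h => hx (hFinj (by simpa using h))
    have hex : ∃ s : (k : Fin K) × Fin (qd k), ((Fk s.1)ᵀ *ᵥ x) s.2 ≠ 0 := by
      by_contra h
      push_neg at h
      exact hFx (funext fun s => h s)
    obtain ⟨⟨k, a⟩, hs⟩ := hex
    refine Finset.sum_pos' (fun k' _ => mul_nonneg (inv_nonneg.mpr (hα k').le)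
      (by simpa using (hQk k').posSemidef.dotProduct_mulVec_nonneg ((Fk k')ᵀ *ᵥ x))) ⟨k, Finset.mem_univ k, ?_⟩
    have hne : (Fk k)ᵀ *ᵥ x ≠ 0 := fun h => hs (congrFun h a)
    exact mul_pos (inv_pos.mpr (hα k)) (by simpa using (hQk k).dotProduct_mulVec_pos hne)
  have hQpd : Q.PosDef := by
    have := Matrix.PosDef.posSemidef_add h1 hSpd
    rwa [sub_add_cancel] at this
  -- R positive definite
  have hTpd : (∑ k, α k • ((Gk k)ᵀ * Rk k * Gk k)).PosDef := by
    have hTpsd : ∀ k, (α k • ((Gk k)ᵀ * Rk k * Gk k)).PosSemidef := fun k => by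
      have h := (hRk k).posSemidef.conjTranspose_mul_mul_same (Gk k)
      rw [conjTranspose_eq_transpose_of_trivial] at h
      exact auxSmulPSD h (hα k).le
    refine posDef_iff_dotProduct_mulVec.mpr ⟨(auxSumPSD _ hTpsd).1, fun x hx => ?_⟩
    simp only [star_trivial]
    have hquad : x ⬝ᵥ (∑ k, α k • ((Gk k)ᵀ * Rk k * Gk k)) *ᵥ x =
        ∑ k, α k * ((Gk k *ᵥ x) ⬝ᵥ Rk k *ᵥ (Gk k *ᵥ x)) := by
      rw [auxSumQuad]
      refine Finset.sum_congr rfl fun k _ => ?_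
      rw [smul_mulVec, dotProduct_smul, smul_eq_mul]
      have := auxQuad (Gk k)ᵀ (Rk k) x
      rw [transpose_transpose] at this
      rw [this]
    rw [hquad]
    have hGx : concatG Gk *ᵥ x ≠ 0 := fun h => hx (hGinj (by simpa using h))
    have hex : ∃ s : (k : Fin K) × Fin (rd k), (Gk s.1 *ᵥ x) s.2 ≠ 0 := by
      by_contra h
      push_neg at h
      exact hGx (funext fun s => h s)
    obtain ⟨⟨k, a⟩, hs⟩ := hex
    refine Finset.sum_pos' (fun k' _ => mul_nonneg (hα k').le
      (by simpa using (hRk k').posSemidef.dotProduct_mulVec_nonneg (Gk k' *ᵥ x))) ⟨k, Finset.mem_univ k, ?_⟩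
    have hne : Gk k *ᵥ x ≠ 0 := fun h => hs (congrFun h a)
    exact mul_pos (hα k) (by simpa using (hRk k).dotProduct_mulVec_pos hne)
  have hRpd : R.PosDef := by
    have := Matrix.PosDef.posSemidef_add h2 hTpd
    rwa [sub_add_cancel] at this
  refine ⟨hQpd, hRpd, ?_⟩
  -- Schur complement argument
  set B := concatF Fk with hB
  set D := blockDiagonal' (fun k => α k • (Qk k)⁻¹) with hD
  have hDpd : D.PosDef := auxBDposDef _ fun k => by
    refine posDef_iff_dotProduct_mulVec.mpr ⟨?_, fun y hy => ?_⟩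
    · simpa [Matrix.IsHermitian, conjTranspose_smul] using
        congrArg (α k • ·) ((hQk k).inv).1
    · rw [smul_mulVec, dotProduct_smul]
      exact smul_pos (hα k) (((hQk k).inv).dotProduct_mulVec_pos hy)
  have hDinv : D⁻¹ = blockDiagonal' (fun k => (α k)⁻¹ • Qk k) := by
    refine inv_eq_right_inv ?_
    have hprod : (fun k => (α k • (Qk k)⁻¹) * ((α k)⁻¹ • Qk k)) =
        (1 : ∀ k, Matrix (Fin (qd k)) (Fin (qd k)) ℝ) := funext fun k => by
      rw [Matrix.smul_mul, Matrix.mul_smul, smul_smul, mul_inv_cancel₀ (hα k).ne',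
        Matrix.nonsing_inv_mul _ (hQk k).det_pos.ne'.isUnit, one_smul]
      rfl
    rw [hD, ← blockDiagonal'_mul, hprod, blockDiagonal'_one]
  haveI : Invertible Q := hQpd.isUnit.invertible
  haveI : Invertible D := hDpd.isUnit.invertible
  have hblocks : (fromBlocks Q B Bᴴ D).PosSemidef := by
    rw [Matrix.PosDef.fromBlocks₂₂ Q B hDpd]
    rw [conjTranspose_eq_transpose_of_trivial, hDinv, hB, concat_mul_blockDiag]
    have : ∀ k, Fk k * ((α k)⁻¹ • Qk k) * (Fk k)ᵀ = (α k)⁻¹ • (Fk k * Qk k * (Fk k)ᵀ) := by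
      intro k
      rw [Matrix.mul_smul, Matrix.smul_mul]
    simp_rw [this]
    exact h1
  have := (Matrix.PosDef.fromBlocks₁₁ B D hQpd).mp hblocks
  rwa [conjTranspose_eq_transpose_of_trivial] at this
end

section
/- Suppose Assumption 1 holds. Define α* ∈ ℝ^K by α*_k = r·√(tr(F_k Q_k F_kᵀ)/tr(G_kᵀ R_k G_k)) / Σ_{l=1}^K √(tr(F_l Q_l F_lᵀ)·tr(G_lᵀ R_l G_l)). Then α* ∈ S, and for every α ∈ S one has tr(R(α*) ⊗ Q(α*)) ≤ tr(R(α) ⊗ Q(α)); i.e., α* minimizes the trace criterion tr(R(α) ⊗ Q(α)) over S. -/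
open Matrix
open scoped Kronecker

/-- `Q(α) = Σ_k (1/α_k) F_k Q_k F_kᵀ`. -/
noncomputable def Qmat {q K : ℕ} {qd : Fin K → ℕ} (Qk : ∀ k, Matrix (Fin (qd k)) (Fin (qd k)) ℝ)
    (Fk : ∀ k, Matrix (Fin q) (Fin (qd k)) ℝ) (α : Fin K → ℝ) :
    Matrix (Fin q) (Fin q) ℝ :=
  ∑ k, (α k)⁻¹ • (Fk k * Qk k * (Fk k)ᵀ)

/-- `R(α) = Σ_k α_k G_kᵀ R_k G_k`. -/
def Rmat {r K : ℕ} {rd : Fin K → ℕ} (Rk : ∀ k, Matrix (Fin (rd k)) (Fin (rd k)) ℝ)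
    (Gk : ∀ k, Matrix (Fin (rd k)) (Fin r) ℝ) (α : Fin K → ℝ) :
    Matrix (Fin r) (Fin r) ℝ :=
  ∑ k, α k • ((Gk k)ᵀ * Rk k * Gk k)

/-- The feasible set `S = {α > 0 : tr(R(α)) = r}`. -/
def feasibleS {r K : ℕ} {rd : Fin K → ℕ} (Rk : ∀ k, Matrix (Fin (rd k)) (Fin (rd k)) ℝ)
    (Gk : ∀ k, Matrix (Fin (rd k)) (Fin r) ℝ) : Set (Fin K → ℝ) :=
  {α | (∀ k, 0 < α k) ∧ (Rmat Rk Gk α).trace = (r : ℝ)}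

lemma trace_conj_pos {m n : ℕ} {Q : Matrix (Fin n) (Fin n) ℝ} (hQ : Q.PosDef)
    (F : Matrix (Fin m) (Fin n) ℝ) (hF : F ≠ 0) : 0 < (F * Q * Fᵀ).trace := by
  have hdiag : ∀ i, (F * Q * Fᵀ) i i = (fun j => F i j) ⬝ᵥ Q *ᵥ (fun j => F i j) := by
    intro i
    simp only [Matrix.mul_apply, Matrix.transpose_apply, dotProduct, Matrix.mulVec,
      Finset.sum_mul, Finset.mul_sum]
    rw [Finset.sum_comm]
    exact Finset.sum_congr rfl fun j _ => Finset.sum_congr rfl fun l _ => by ring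
  obtain ⟨i, j, hij⟩ : ∃ i j, F i j ≠ 0 := by
    by_contra h; push_neg at h; exact hF (by ext i j; exact h i j)
  rw [Matrix.trace]
  apply Finset.sum_pos'
  · intro i _
    rw [Matrix.diag_apply, hdiag]
    simpa using hQ.posSemidef.dotProduct_mulVec_nonneg (fun j => F i j)
  · refine ⟨i, Finset.mem_univ i, ?_⟩
    rw [Matrix.diag_apply, hdiag]
    simpa using hQ.dotProduct_mulVec_pos (x := fun j => F i j) (fun h0 => hij (congrFun h0 j))

/-- Proposition 5: under Assumption 1, the explicit `α*` belongs to `S` and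
minimizes the trace criterion `tr(R(α) ⊗ Q(α))` over `S`. -/
theorem trace_criterion_optimal {q r K : ℕ} {qd rd : Fin K → ℕ}
    (Qk : ∀ k, Matrix (Fin (qd k)) (Fin (qd k)) ℝ)
    (Rk : ∀ k, Matrix (Fin (rd k)) (Fin (rd k)) ℝ)
    (hQk : ∀ k, (Qk k).PosDef) (hRk : ∀ k, (Rk k).PosDef)
    (Fk : ∀ k, Matrix (Fin q) (Fin (qd k)) ℝ)
    (Gk : ∀ k, Matrix (Fin (rd k)) (Fin r) ℝ)
    -- Assumption 1
    (hFk : ∀ k, Fk k ≠ 0) (hGk : ∀ k, Gk k ≠ 0)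
    (hF : (Matrix.of fun i (j : (k : Fin K) × Fin (qd k)) => Fk j.1 i j.2 :
      Matrix (Fin q) ((k : Fin K) × Fin (qd k)) ℝ).rank = q)
    (hG : (Matrix.of fun (j : (k : Fin K) × Fin (rd k)) i => Gk j.1 j.2 i :
      Matrix ((k : Fin K) × Fin (rd k)) (Fin r) ℝ).rank = r)
    (αstar : Fin K → ℝ)
    (hαstar : αstar = fun k =>
      (r : ℝ) * Real.sqrt ((Fk k * Qk k * (Fk k)ᵀ).trace / ((Gk k)ᵀ * Rk k * Gk k).trace) /
        ∑ l, Real.sqrt ((Fk l * Qk l * (Fk l)ᵀ).trace * ((Gk l)ᵀ * Rk l * Gk l).trace)) :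
    αstar ∈ feasibleS Rk Gk ∧
      ∀ α ∈ feasibleS Rk Gk,
        (Rmat Rk Gk αstar ⊗ₖ Qmat Qk Fk αstar).trace ≤
          (Rmat Rk Gk α ⊗ₖ Qmat Qk Fk α).trace := by
  -- basic trace computations
  set a : Fin K → ℝ := fun k => (Fk k * Qk k * (Fk k)ᵀ).trace with ha_def
  set b : Fin K → ℝ := fun k => ((Gk k)ᵀ * Rk k * Gk k).trace with hb_def
  have ha : ∀ k, 0 < a k := fun k => trace_conj_pos (hQk k) (Fk k) (hFk k)
  have hb : ∀ k, 0 < b k := by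
    intro k
    have : ((Gk k)ᵀ ≠ 0) := fun h => hGk k (by simpa using congrArg Matrix.transpose h)
    simpa [hb_def] using trace_conj_pos (hRk k) (Gk k)ᵀ this
  have htrR : ∀ α : Fin K → ℝ, (Rmat Rk Gk α).trace = ∑ k, α k * b k := by
    intro α
    simp [Rmat, Matrix.trace_sum, Matrix.trace_smul, smul_eq_mul, hb_def]
  have htrQ : ∀ α : Fin K → ℝ, (Qmat Qk Fk α).trace = ∑ k, (α k)⁻¹ * a k := by
    intro α
    simp [Qmat, Matrix.trace_sum, Matrix.trace_smul, smul_eq_mul, ha_def]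
  rcases Nat.eq_zero_or_pos K with hK | hK
  · -- degenerate case K = 0
    subst hK
    have hr : r = 0 := by
      have : (Matrix.of fun (j : (k : Fin 0) × Fin (rd k)) i => Gk j.1 j.2 i :
          Matrix ((k : Fin 0) × Fin (rd k)) (Fin r) ℝ).rank = 0 := by
        have h0 : (Matrix.of fun (j : (k : Fin 0) × Fin (rd k)) i => Gk j.1 j.2 i :
            Matrix ((k : Fin 0) × Fin (rd k)) (Fin r) ℝ) = 0 := by
          ext ⟨k, _⟩ _; exact absurd k.2 (by simp)
        rw [h0]; exact Matrix.rank_zero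
      rw [this] at hG; exact hG.symm
    subst hr
    refine ⟨⟨fun k => absurd k.2 (by simp), by simp [htrR]⟩, fun α hα => ?_⟩
    simp [Matrix.trace_kronecker, htrR, htrQ]
  · -- main case: K > 0
    haveI : Nonempty (Fin K) := Fin.pos_iff_nonempty.mp hK
    have hne : (Finset.univ : Finset (Fin K)).Nonempty := Finset.univ_nonempty
    have hr : (0 : ℝ) < r := by
      obtain ⟨k⟩ := Fin.pos_iff_nonempty.mp hK
      obtain ⟨i, j, hij⟩ : ∃ i j, Gk k i j ≠ 0 := by
        by_contra h; push_neg at h; exact hGk k (by ext i j; exact h i j)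
      have : 0 < r := Fin.pos_iff_nonempty.mpr ⟨j⟩
      exact_mod_cast this
    set s : ℝ := ∑ l, Real.sqrt (a l * b l) with hs_def
    have hs : 0 < s := Finset.sum_pos (fun l _ =>
      Real.sqrt_pos.mpr (mul_pos (ha l) (hb l))) hne
    have hα' : ∀ k, αstar k = r * Real.sqrt (a k / b k) / s := by
      intro k; rw [hαstar]
    have hαpos : ∀ k, 0 < αstar k := by
      intro k
      rw [hα' k]
      exact div_pos (mul_pos hr (Real.sqrt_pos.mpr (div_pos (ha k) (hb k)))) hs
    -- key sqrt identities
    have key1 : ∀ k, Real.sqrt (a k / b k) * b k = Real.sqrt (a k * b k) := by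
      intro k
      rw [Real.sqrt_div (ha k).le, Real.sqrt_mul (ha k).le, div_mul_eq_mul_div,
        mul_div_assoc, Real.div_sqrt]
    have key2 : ∀ k, a k / Real.sqrt (a k / b k) = Real.sqrt (a k * b k) := by
      intro k
      rw [Real.sqrt_div (ha k).le, div_div_eq_mul_div, mul_comm,
        mul_div_assoc, Real.div_sqrt, Real.sqrt_mul (ha k).le, mul_comm]
    -- trace of R(α*)
    have htrRstar : (Rmat Rk Gk αstar).trace = r := by
      rw [htrR]
      have : ∀ k, αstar k * b k = (r / s) * Real.sqrt (a k * b k) := by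
        intro k
        rw [hα' k, div_mul_eq_mul_div, mul_assoc, key1 k]; ring
      rw [Finset.sum_congr rfl fun k _ => this k, ← Finset.mul_sum, ← hs_def,
        div_mul_cancel₀ _ hs.ne']
    have htrQstar : (Qmat Qk Fk αstar).trace = s ^ 2 / r := by
      rw [htrQ]
      have : ∀ k, (αstar k)⁻¹ * a k = (s / r) * Real.sqrt (a k * b k) := by
        intro k
        have hne2 : Real.sqrt (a k / b k) ≠ 0 :=
          (Real.sqrt_pos.mpr (div_pos (ha k) (hb k))).ne'
        rw [hα' k, inv_div, ← key2 k]
        field_simp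
      rw [Finset.sum_congr rfl fun k _ => this k, ← Finset.mul_sum, ← hs_def]
      field_simp
    refine ⟨⟨hαpos, htrRstar⟩, fun α hα => ?_⟩
    obtain ⟨hαpos', -⟩ := hα
    rw [Matrix.trace_kronecker, Matrix.trace_kronecker, htrRstar, htrQstar,
      htrR α, htrQ α]
    rw [mul_div_assoc'] at *
    have hval : (r : ℝ) * s ^ 2 / r = s ^ 2 := by field_simp
    rw [hval]
    -- Cauchy-Schwarz
    have CS := Finset.sum_mul_sq_le_sq_mul_sq Finset.univ
      (fun k => Real.sqrt (α k * b k)) (fun k => Real.sqrt (a k / α k))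
    have h1 : ∀ k, Real.sqrt (α k * b k) * Real.sqrt (a k / α k) = Real.sqrt (a k * b k) := by
      intro k
      rw [← Real.sqrt_mul (mul_pos (hαpos' k) (hb k)).le]
      congr 1
      field_simp [(hαpos' k).ne']
    have h2 : ∀ k, Real.sqrt (α k * b k) ^ 2 = α k * b k := fun k =>
      Real.sq_sqrt (mul_pos (hαpos' k) (hb k)).le
    have h3 : ∀ k, Real.sqrt (a k / α k) ^ 2 = (α k)⁻¹ * a k := by
      intro k
      rw [Real.sq_sqrt (div_pos (ha k) (hαpos' k)).le, div_eq_inv_mul]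
    simp only [h1, h2, h3] at CS
    calc s ^ 2 = (∑ k, Real.sqrt (a k * b k)) ^ 2 := by rw [hs_def]
      _ ≤ _ := CS
end

section
/- Suppose Assumption 1 holds. Then f is differentiable at every α ∈ ℝ^K with all α_k > 0, with partial derivatives ∂f/∂α_k (α) = q·tr(R(α)⁻¹ G_kᵀ R_k G_k) − (r/α_k²)·tr(Q(α)⁻¹ F_k Q_k F_kᵀ). Consequently, for any fixed α⁽ᵗ⁾ ∈ ℝ^K with all α⁽ᵗ⁾_k > 0, the gradient of the surrogate g(· | α⁽ᵗ⁾) at α⁽ᵗ⁾ equals ∇f(α⁽ᵗ⁾), where g(α | α⁽ᵗ⁾) := Σ_{k=1}^K (A_k α_k + B_k/α_k) + C with A_k := q·tr(R(α⁽ᵗ⁾)⁻¹ G_kᵀ R_k G_k), B_k := r·tr(Q(α⁽ᵗ⁾)⁻¹ F_k Q_k F_kᵀ), C := f(α⁽ᵗ⁾) − 2qr. -/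
open Matrix
open scoped Kronecker

/-- The objective `f(α) = log det (R(α) ⊗ Q(α))`. -/
noncomputable def fobj {q r K : ℕ} {qd rd : Fin K → ℕ}
    (Qk : ∀ k, Matrix (Fin (qd k)) (Fin (qd k)) ℝ)
    (Rk : ∀ k, Matrix (Fin (rd k)) (Fin (rd k)) ℝ)
    (Fk : ∀ k, Matrix (Fin q) (Fin (qd k)) ℝ)
    (Gk : ∀ k, Matrix (Fin (rd k)) (Fin r) ℝ) (α : Fin K → ℝ) : ℝ :=
  Real.log (Rmat Rk Gk α ⊗ₖ Qmat Qk Fk α).det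

/-- The continuous linear map on `ℝ^K` with coefficients `c`, representing a gradient. -/
noncomputable def gradCLM {K : ℕ} (c : Fin K → ℝ) : (Fin K → ℝ) →L[ℝ] ℝ :=
  ∑ k, c k • (ContinuousLinearMap.proj k : (Fin K → ℝ) →L[ℝ] ℝ)

namespace MMhelp
variable {n : ℕ}


variable {n : ℕ}

/-- determinant as a continuous multilinear map in the rows -/
noncomputable def detCM (n : ℕ) : ContinuousMultilinearMap ℝ (fun _ : Fin n => (Fin n → ℝ)) ℝ :=
  MultilinearMap.mkContinuous
    (Matrix.detRowAlternating : (Fin n → ℝ) [⋀^Fin n]→ₗ[ℝ] ℝ).toMultilinearMap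
    (Nat.factorial n) (by
      intro m
      have hm : (Matrix.detRowAlternating (R := ℝ) (n := Fin n)).toMultilinearMap m
          = (Matrix.of m).det := rfl
      rw [hm, Matrix.det_apply]
      calc ‖∑ σ : Equiv.Perm (Fin n), Equiv.Perm.sign σ • ∏ i, Matrix.of m (σ i) i‖
          ≤ ∑ σ : Equiv.Perm (Fin n), ‖Equiv.Perm.sign σ • ∏ i, Matrix.of m (σ i) i‖ :=
            norm_sum_le _ _
        _ ≤ ∑ _σ : Equiv.Perm (Fin n), ∏ i, ‖m i‖ := by
            apply Finset.sum_le_sum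
            intro σ _
            have h1 : ‖Equiv.Perm.sign σ • ∏ i, Matrix.of m (σ i) i‖
                = ‖∏ i, Matrix.of m (σ i) i‖ := by
              rcases Int.units_eq_one_or (Equiv.Perm.sign σ) with h | h <;> simp [h]
            rw [h1]
            have h2 : ‖∏ i, Matrix.of m (σ i) i‖ ≤ ∏ i, ‖m (σ i)‖ := by
              rw [norm_prod]
              exact Finset.prod_le_prod (fun i _ => norm_nonneg _)
                (fun i _ => norm_le_pi_norm (m (σ i)) i)
            calc ‖∏ i, Matrix.of m (σ i) i‖ ≤ ∏ i, ‖m (σ i)‖ := h2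
              _ = ∏ i, ‖m i‖ := Equiv.prod_comp σ (fun i => ‖m i‖)
        _ = (Nat.factorial n : ℝ) * ∏ i, ‖m i‖ := by
            rw [Finset.sum_const, Finset.card_univ, Fintype.card_perm]
            simp [nsmul_eq_mul])

lemma detCM_apply (m : Fin n → Fin n → ℝ) : detCM n m = (Matrix.of m).det := rfl

lemma sum_det_updateRow (A B : Matrix (Fin n) (Fin n) ℝ) :
    ∑ j, (A.updateRow j (B j)).det = (A.adjugate * B).trace := by
  have key : ∀ j, (A.updateRow j (B j)).det = ∑ i, B j i * A.adjugate i j := by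
    intro j
    have hBj : B j = ∑ i, B j i • (Pi.single i 1 : Fin n → ℝ) := by
      funext t
      simp [Pi.single_apply, Finset.sum_ite_eq', eq_comm]
    calc (A.updateRow j (B j)).det
        = (Matrix.detRowAlternating (R := ℝ)) (Function.update A j (B j)) := rfl
      _ = ∑ i, B j i * A.adjugate i j := by
          conv_lhs => rw [hBj]
          erw [AlternatingMap.map_update_sum]
          refine Finset.sum_congr rfl fun i _ => ?_
          erw [AlternatingMap.map_update_smul]
          have : (Matrix.detRowAlternating (R := ℝ)) (Function.update A j
              (Pi.single i 1 : Fin n → ℝ)) = (A.updateRow j (Pi.single i 1)).det := rfl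
          rw [this, ← Matrix.adjugate_apply]
          simp [smul_eq_mul]
  rw [Matrix.trace]
  simp only [key, Matrix.diag_apply, Matrix.mul_apply]
  rw [Finset.sum_comm]
  refine Finset.sum_congr rfl fun i _ => Finset.sum_congr rfl fun j _ => mul_comm _ _





lemma quad_eq {m n : ℕ} (R : Matrix (Fin m) (Fin m) ℝ) (G : Matrix (Fin m) (Fin n) ℝ)
    (x : Fin n → ℝ) :
    x ⬝ᵥ ((Gᵀ * R * G) *ᵥ x) = (G *ᵥ x) ⬝ᵥ (R *ᵥ (G *ᵥ x)) := by
  rw [← Matrix.mulVec_mulVec, ← Matrix.mulVec_mulVec, Matrix.dotProduct_mulVec x,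
    Matrix.vecMul_transpose]

lemma term_nonneg {m n : ℕ} {R : Matrix (Fin m) (Fin m) ℝ} (hR : R.PosDef)
    (G : Matrix (Fin m) (Fin n) ℝ) (x : Fin n → ℝ) :
    0 ≤ x ⬝ᵥ ((Gᵀ * R * G) *ᵥ x) := by
  rw [quad_eq]
  by_cases h : G *ᵥ x = 0
  · simp [h]
  · have := hR.dotProduct_mulVec_pos h
    simpa using this.le

lemma term_pos {m n : ℕ} {R : Matrix (Fin m) (Fin m) ℝ} (hR : R.PosDef)
    {G : Matrix (Fin m) (Fin n) ℝ} {x : Fin n → ℝ} (hx : G *ᵥ x ≠ 0) :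
    0 < x ⬝ᵥ ((Gᵀ * R * G) *ᵥ x) := by
  rw [quad_eq]
  simpa using hR.dotProduct_mulVec_pos hx

lemma herm_term {m n : ℕ} {R : Matrix (Fin m) (Fin m) ℝ} (hR : R.IsHermitian)
    (G : Matrix (Fin m) (Fin n) ℝ) : (Gᵀ * R * G).IsHermitian := by
  have := Matrix.isHermitian_conjTranspose_mul_mul G hR
  rwa [Matrix.conjTranspose_eq_transpose_of_trivial] at this

lemma posDef_sum {n K : ℕ} {md : Fin K → ℕ}
    (Rk : ∀ k, Matrix (Fin (md k)) (Fin (md k)) ℝ)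
    (Gk : ∀ k, Matrix (Fin (md k)) (Fin n) ℝ)
    (hRk : ∀ k, (Rk k).PosDef) (c : Fin K → ℝ) (hc : ∀ k, 0 < c k)
    (hG : ∀ x : Fin n → ℝ, x ≠ 0 → ∃ k, Gk k *ᵥ x ≠ 0) :
    (∑ k, c k • ((Gk k)ᵀ * Rk k * Gk k)).PosDef := by
  rw [Matrix.posDef_iff_dotProduct_mulVec]
  constructor
  · show (∑ k, c k • ((Gk k)ᵀ * Rk k * Gk k))ᴴ = _
    rw [Matrix.conjTranspose_sum]
    refine Finset.sum_congr rfl fun k _ => ?_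
    rw [Matrix.conjTranspose_smul, (herm_term (hRk k).1 (Gk k)).eq, star_trivial]
  · intro x hx
    have hexp : star x ⬝ᵥ ((∑ k, c k • ((Gk k)ᵀ * Rk k * Gk k)) *ᵥ x)
        = ∑ k, c k * (x ⬝ᵥ (((Gk k)ᵀ * Rk k * Gk k) *ᵥ x)) := by
      rw [star_trivial]
      have hmv : (∑ k, c k • ((Gk k)ᵀ * Rk k * Gk k)) *ᵥ x
          = ∑ k, c k • (((Gk k)ᵀ * Rk k * Gk k) *ᵥ x) := by
        funext i
        simp only [Matrix.mulVec, dotProduct, Finset.sum_apply, Pi.smul_apply, Matrix.sum_apply,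
          Matrix.smul_apply, smul_eq_mul, Finset.sum_mul, Finset.mul_sum, mul_assoc]
        rw [Finset.sum_comm]
      have hds : ∀ v : Fin K → Fin n → ℝ, x ⬝ᵥ (∑ k, v k) = ∑ k, x ⬝ᵥ v k := by
        intro v
        simp only [dotProduct, Finset.sum_apply, Finset.mul_sum]
        exact Finset.sum_comm
      rw [hmv, hds]
      refine Finset.sum_congr rfl fun k _ => ?_
      rw [dotProduct_smul, smul_eq_mul]
    rw [hexp]
    obtain ⟨k0, hk0⟩ := hG x hx
    refine Finset.sum_pos' (fun k _ => mul_nonneg (hc k).le (term_nonneg (hRk k) _ _))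
      ⟨k0, Finset.mem_univ k0, mul_pos (hc k0) (term_pos (hRk k0) hk0)⟩





lemma mulVec_injective_of_rank {m : Type*} [Fintype m] {n : ℕ}
    (A : Matrix m (Fin n) ℝ) (h : A.rank = n) :
    ∀ x : Fin n → ℝ, A *ᵥ x = 0 → x = 0 := by
  intro x hx
  have h1 := LinearMap.finrank_range_add_finrank_ker (Matrix.mulVecLin A)
  rw [show Module.finrank ℝ (LinearMap.range (Matrix.mulVecLin A)) = A.rank from rfl, h,
    Module.finrank_fin_fun] at h1
  have hker : LinearMap.ker (Matrix.mulVecLin A) = ⊥ := by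
    have : Module.finrank ℝ (LinearMap.ker (Matrix.mulVecLin A)) = 0 := by omega
    exact Submodule.finrank_eq_zero.mp this
  have : x ∈ LinearMap.ker (Matrix.mulVecLin A) := by
    simpa [Matrix.mulVecLin_apply] using hx
  rw [hker] at this
  simpa using this

lemma exists_G_ne {r K : ℕ} {rd : Fin K → ℕ}
    (Gk : ∀ k, Matrix (Fin (rd k)) (Fin r) ℝ)
    (hG : (Matrix.of fun (j : (k : Fin K) × Fin (rd k)) i => Gk j.1 j.2 i :
      Matrix ((k : Fin K) × Fin (rd k)) (Fin r) ℝ).rank = r)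
    (x : Fin r → ℝ) (hx : x ≠ 0) : ∃ k, Gk k *ᵥ x ≠ 0 := by
  by_contra hc
  push_neg at hc
  apply hx
  apply mulVec_injective_of_rank _ hG
  funext j
  have := congrFun (hc j.1) j.2
  simpa [Matrix.mulVec, dotProduct] using this

lemma exists_F_ne {q K : ℕ} {qd : Fin K → ℕ}
    (Fk : ∀ k, Matrix (Fin q) (Fin (qd k)) ℝ)
    (hF : (Matrix.of fun i (j : (k : Fin K) × Fin (qd k)) => Fk j.1 i j.2 :
      Matrix (Fin q) ((k : Fin K) × Fin (qd k)) ℝ).rank = q)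
    (x : Fin q → ℝ) (hx : x ≠ 0) : ∃ k, (Fk k)ᵀ *ᵥ x ≠ 0 := by
  by_contra hc
  push_neg at hc
  apply hx
  have hT : ((Matrix.of fun i (j : (k : Fin K) × Fin (qd k)) => Fk j.1 i j.2 :
      Matrix (Fin q) ((k : Fin K) × Fin (qd k)) ℝ)ᵀ).rank = q := by
    rw [Matrix.rank_transpose]; exact hF
  apply mulVec_injective_of_rank _ hT
  funext j
  have := congrFun (hc j.1) j.2
  simpa [Matrix.mulVec, dotProduct, Matrix.transpose_apply] using this






lemma hp {K : ℕ} (k : Fin K) (αt : Fin K → ℝ) :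
    HasFDerivAt (fun α : Fin K → ℝ => α k)
      (ContinuousLinearMap.proj k : (Fin K → ℝ) →L[ℝ] ℝ) αt :=
  (ContinuousLinearMap.proj (R := ℝ) (φ := fun _ : Fin K => ℝ) k).hasFDerivAt

lemma hasFDerivAt_inv_proj {K : ℕ} (k : Fin K) (αt : Fin K → ℝ) (h : αt k ≠ 0) :
    HasFDerivAt (fun α : Fin K → ℝ => (α k)⁻¹)
      ((-(αt k ^ 2)⁻¹) • (ContinuousLinearMap.proj k : (Fin K → ℝ) →L[ℝ] ℝ)) αt :=
  HasDerivAt.comp_hasFDerivAt αt (hasDerivAt_inv h)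
    (hp k αt)

lemma surrogate_deriv {K : ℕ} (A B : Fin K → ℝ) (CC : ℝ) (αt : Fin K → ℝ)
    (hαt : ∀ k, 0 < αt k) :
    HasFDerivAt (fun α : Fin K → ℝ => (∑ k, (A k * α k + B k / α k)) + CC)
      (gradCLM (fun k => A k - B k / (αt k) ^ 2)) αt := by
  have h : ∀ k : Fin K, HasFDerivAt (fun α : Fin K → ℝ => A k * α k + B k * (α k)⁻¹)
      (A k • (ContinuousLinearMap.proj k : (Fin K → ℝ) →L[ℝ] ℝ)
        + B k • ((-(αt k ^ 2)⁻¹) • (ContinuousLinearMap.proj k : (Fin K → ℝ) →L[ℝ] ℝ))) αt := by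
    intro k
    exact ((hp k αt).const_mul (A k)).add
      ((hasFDerivAt_inv_proj k αt (hαt k).ne').const_mul (B k))
  have hsum := (HasFDerivAt.sum (fun k (_ : k ∈ Finset.univ) => h k)).add_const CC
  have heq : (fun α : Fin K → ℝ => (∑ k, (A k * α k + B k * (α k)⁻¹)) + CC)
      = fun α : Fin K → ℝ => (∑ k, (A k * α k + B k / α k)) + CC := by
    funext α
    simp [div_eq_mul_inv]
  simp only [Finset.sum_apply] at hsum
  rw [heq] at hsum
  refine hsum.congr_fderiv ?_
  symm
  rw [gradCLM]
  refine Finset.sum_congr rfl fun k _ => ?_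
  rw [smul_smul, ← add_smul]
  congr 1
  ring





/-- trace (M * of ·) as a continuous linear map -/
noncomputable def trMulCLM (M : Matrix (Fin n) (Fin n) ℝ) :
    (Fin n → Fin n → ℝ) →L[ℝ] ℝ :=
  LinearMap.toContinuousLinearMap
  { toFun := fun m => (M * Matrix.of m).trace
    map_add' := fun x y => by
      show (M * Matrix.of (x + y)).trace = (M * Matrix.of x).trace + (M * Matrix.of y).trace
      rw [show Matrix.of (x + y) = Matrix.of x + Matrix.of y from rfl,
        Matrix.mul_add, Matrix.trace_add]
    map_smul' := fun c x => by
      show (M * Matrix.of (c • x)).trace = c • (M * Matrix.of x).trace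
      rw [show Matrix.of (c • x) = c • Matrix.of x from rfl,
        Matrix.mul_smul, Matrix.trace_smul] }

@[simp] lemma trMulCLM_apply (M : Matrix (Fin n) (Fin n) ℝ) (m : Fin n → Fin n → ℝ) :
    trMulCLM M m = (M * Matrix.of m).trace := rfl

lemma hasFDerivAt_det {E : Type*} [NormedAddCommGroup E] [NormedSpace ℝ E]
    {f : E → Fin n → Fin n → ℝ} {f' : E →L[ℝ] (Fin n → Fin n → ℝ)} {x : E}
    (hf : HasFDerivAt f f' x) :
    HasFDerivAt (fun y => (Matrix.of (f y)).det)
      ((trMulCLM (Matrix.of (f x)).adjugate).comp f') x := by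
  have h1 : HasFDerivAt (detCM n) ((detCM n).linearDeriv (f x)) (f x) :=
    (detCM n).hasFDerivAt (f x)
  have h2 := h1.comp x hf
  have heq : (fun y => (Matrix.of (f y)).det) = fun y => detCM n (f y) := by
    funext y; rw [detCM_apply]
  rw [heq]
  refine h2.congr_fderiv ?_
  symm
  ext v
  rw [ContinuousLinearMap.comp_apply, ContinuousLinearMap.comp_apply,
    ContinuousMultilinearMap.linearDeriv_apply, trMulCLM_apply]
  rw [← sum_det_updateRow (Matrix.of (f x)) (Matrix.of (f' v))]
  exact Finset.sum_congr rfl fun i _ => (detCM_apply _).symm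

lemma hasFDerivAt_logdet {E : Type*} [NormedAddCommGroup E] [NormedSpace ℝ E]
    {f : E → Fin n → Fin n → ℝ} {f' : E →L[ℝ] (Fin n → Fin n → ℝ)} {x : E}
    (hf : HasFDerivAt f f' x) (hd : (Matrix.of (f x)).det ≠ 0) :
    HasFDerivAt (fun y => Real.log (Matrix.of (f y)).det)
      ((trMulCLM (Matrix.of (f x))⁻¹).comp f') x := by
  have h := (hasFDerivAt_det hf).log hd
  convert h using 1
  ext v
  simp only [ContinuousLinearMap.comp_apply, ContinuousLinearMap.smul_apply, trMulCLM_apply]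
  rw [Matrix.inv_def, Ring.inverse_eq_inv', Matrix.smul_mul, Matrix.trace_smul]



def mfun {a b : ℕ} (M : Matrix (Fin a) (Fin b) ℝ) : Fin a → Fin b → ℝ := fun i j => M i j

@[simp] lemma of_mfun {a b : ℕ} (M : Matrix (Fin a) (Fin b) ℝ) : Matrix.of (mfun M) = M := rfl

noncomputable def RmatL {r K : ℕ} {rd : Fin K → ℕ}
    (Rk : ∀ k, Matrix (Fin (rd k)) (Fin (rd k)) ℝ)
    (Gk : ∀ k, Matrix (Fin (rd k)) (Fin r) ℝ) :
    (Fin K → ℝ) →L[ℝ] (Fin r → Fin r → ℝ) :=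
  LinearMap.toContinuousLinearMap
  { toFun := fun v => mfun (Rmat Rk Gk v)
    map_add' := fun a b => by
      show mfun (Rmat Rk Gk (a + b)) = mfun (Rmat Rk Gk a) + mfun (Rmat Rk Gk b)
      funext i j
      show Rmat Rk Gk (a + b) i j = Rmat Rk Gk a i j + Rmat Rk Gk b i j
      rw [show Rmat Rk Gk (a+b) = Rmat Rk Gk a + Rmat Rk Gk b from ?_]
      · rfl
      simp only [Rmat, Pi.add_apply]
      rw [← Finset.sum_add_distrib]
      refine Finset.sum_congr rfl fun k _ => ?_
      rw [add_smul]
    map_smul' := fun c a => by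
      show mfun (Rmat Rk Gk (c • a)) = c • mfun (Rmat Rk Gk a)
      funext i j
      show Rmat Rk Gk (c • a) i j = c * Rmat Rk Gk a i j
      rw [show Rmat Rk Gk (c • a) = c • Rmat Rk Gk a from ?_]
      · rfl
      simp only [Rmat, Pi.smul_apply, smul_eq_mul]
      rw [Finset.smul_sum]
      refine Finset.sum_congr rfl fun k _ => ?_
      rw [smul_smul] }

lemma RmatL_apply {r K : ℕ} {rd : Fin K → ℕ}
    (Rk : ∀ k, Matrix (Fin (rd k)) (Fin (rd k)) ℝ)
    (Gk : ∀ k, Matrix (Fin (rd k)) (Fin r) ℝ) (v : Fin K → ℝ) :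
    RmatL Rk Gk v = mfun (Rmat Rk Gk v) := rfl

lemma hasFDerivAt_RmatL {r K : ℕ} {rd : Fin K → ℕ}
    (Rk : ∀ k, Matrix (Fin (rd k)) (Fin (rd k)) ℝ)
    (Gk : ∀ k, Matrix (Fin (rd k)) (Fin r) ℝ) (α : Fin K → ℝ) :
    HasFDerivAt (fun β : Fin K → ℝ => mfun (Rmat Rk Gk β))
      (RmatL Rk Gk) α :=
  (RmatL Rk Gk).hasFDerivAt

noncomputable def QmatL {q K : ℕ} {qd : Fin K → ℕ}
    (Qk : ∀ k, Matrix (Fin (qd k)) (Fin (qd k)) ℝ)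
    (Fk : ∀ k, Matrix (Fin q) (Fin (qd k)) ℝ) (α : Fin K → ℝ) :
    (Fin K → ℝ) →L[ℝ] (Fin q → Fin q → ℝ) :=
  ∑ k, ((-(α k ^ 2)⁻¹) • (ContinuousLinearMap.proj k : (Fin K → ℝ) →L[ℝ] ℝ)).smulRight
    (mfun (Fk k * Qk k * (Fk k)ᵀ))

lemma hasFDerivAt_QmatL {q K : ℕ} {qd : Fin K → ℕ}
    (Qk : ∀ k, Matrix (Fin (qd k)) (Fin (qd k)) ℝ)
    (Fk : ∀ k, Matrix (Fin q) (Fin (qd k)) ℝ) (α : Fin K → ℝ) (hα : ∀ k, 0 < α k) :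
    HasFDerivAt (fun β : Fin K → ℝ => mfun (Qmat Qk Fk β))
      (QmatL Qk Fk α) α := by
  have h : ∀ k : Fin K, HasFDerivAt
      (fun β : Fin K → ℝ =>
        (β k)⁻¹ • (mfun (Fk k * Qk k * (Fk k)ᵀ)))
      (((-(α k ^ 2)⁻¹) • (ContinuousLinearMap.proj k : (Fin K → ℝ) →L[ℝ] ℝ)).smulRight
        (mfun (Fk k * Qk k * (Fk k)ᵀ))) α := by
    intro k
    have := (hasFDerivAt_inv_proj k α (hα k).ne').smul
      (hasFDerivAt_const (mfun (Fk k * Qk k * (Fk k)ᵀ)) α)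
    simpa using this
  have hsum := HasFDerivAt.sum (fun k (_ : k ∈ Finset.univ) => h k)
  rw [show (∑ k, ((-(α k ^ 2)⁻¹) •
      (ContinuousLinearMap.proj k : (Fin K → ℝ) →L[ℝ] ℝ)).smulRight
      (mfun (Fk k * Qk k * (Fk k)ᵀ))) = QmatL Qk Fk α
    from rfl] at hsum
  have e : (fun β : Fin K → ℝ => mfun (Qmat Qk Fk β))
      = ∑ k, fun β : Fin K → ℝ => (β k)⁻¹ • mfun (Fk k * Qk k * (Fk k)ᵀ) := by
    funext β i j
    simp [Finset.sum_apply, mfun, Qmat, Matrix.sum_apply]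
  rw [e]
  exact hsum

lemma gradCLM_apply {K : ℕ} (c v : Fin K → ℝ) : gradCLM c v = ∑ k, c k * v k := by
  simp [gradCLM, ContinuousLinearMap.sum_apply, ContinuousLinearMap.smul_apply,
    ContinuousLinearMap.proj_apply, smul_eq_mul]

lemma trace_mul_sum_smul {n K : ℕ} (M : Matrix (Fin n) (Fin n) ℝ) (c : Fin K → ℝ)
    (N : Fin K → Matrix (Fin n) (Fin n) ℝ) :
    (M * ∑ k, c k • N k).trace = ∑ k, c k * (M * N k).trace := by
  rw [Matrix.mul_sum, Matrix.trace_sum]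
  refine Finset.sum_congr rfl fun k _ => ?_
  rw [Matrix.mul_smul, Matrix.trace_smul, smul_eq_mul]

lemma fobj_deriv {q r K : ℕ} {qd rd : Fin K → ℕ}
    (Qk : ∀ k, Matrix (Fin (qd k)) (Fin (qd k)) ℝ)
    (Rk : ∀ k, Matrix (Fin (rd k)) (Fin (rd k)) ℝ)
    (hQk : ∀ k, (Qk k).PosDef) (hRk : ∀ k, (Rk k).PosDef)
    (Fk : ∀ k, Matrix (Fin q) (Fin (qd k)) ℝ)
    (Gk : ∀ k, Matrix (Fin (rd k)) (Fin r) ℝ)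
    (hF : (Matrix.of fun i (j : (k : Fin K) × Fin (qd k)) => Fk j.1 i j.2 :
      Matrix (Fin q) ((k : Fin K) × Fin (qd k)) ℝ).rank = q)
    (hG : (Matrix.of fun (j : (k : Fin K) × Fin (rd k)) i => Gk j.1 j.2 i :
      Matrix ((k : Fin K) × Fin (rd k)) (Fin r) ℝ).rank = r)
    (α : Fin K → ℝ) (hα : ∀ k, 0 < α k) :
    HasFDerivAt (fobj Qk Rk Fk Gk) (gradCLM (fun k =>
      (q : ℝ) * ((Rmat Rk Gk α)⁻¹ * ((Gk k)ᵀ * Rk k * Gk k)).trace -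
        (r : ℝ) / (α k) ^ 2 * ((Qmat Qk Fk α)⁻¹ * (Fk k * Qk k * (Fk k)ᵀ)).trace)) α := by
  have hRpos : ∀ β : Fin K → ℝ, (∀ k, 0 < β k) → (Rmat Rk Gk β).PosDef := fun β hβ =>
    posDef_sum Rk Gk hRk β hβ (exists_G_ne Gk hG)
  have hQpos : ∀ β : Fin K → ℝ, (∀ k, 0 < β k) → (Qmat Qk Fk β).PosDef := by
    intro β hβ
    have h := posDef_sum Qk (fun k => (Fk k)ᵀ) hQk (fun k => (β k)⁻¹)
      (fun k => inv_pos.mpr (hβ k)) (exists_F_ne Fk hF)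
    simp only [Matrix.transpose_transpose] at h
    exact h
  -- derivative of log det R
  have hlogR := hasFDerivAt_logdet (hasFDerivAt_RmatL Rk Gk α)
    (by rw [of_mfun]; exact (hRpos α hα).det_pos.ne')
  have hlogQ := hasFDerivAt_logdet (hasFDerivAt_QmatL Qk Fk α hα)
    (by rw [of_mfun]; exact (hQpos α hα).det_pos.ne')
  have hlog := (hlogR.const_mul (q : ℝ)).add (hlogQ.const_mul (r : ℝ))
  -- eventual equality
  have hUopen : IsOpen {β : Fin K → ℝ | ∀ k, 0 < β k} := by
    have : {β : Fin K → ℝ | ∀ k, 0 < β k}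
        = ⋂ k, (fun β : Fin K → ℝ => β k) ⁻¹' Set.Ioi 0 := by
      ext β; simp [Set.mem_iInter]
    rw [this]
    exact isOpen_iInter_of_finite fun k => (continuous_apply k).isOpen_preimage _ isOpen_Ioi
  have hev : fobj Qk Rk Fk Gk =ᶠ[nhds α]
      (fun β => (q : ℝ) * Real.log (Matrix.of (mfun (Rmat Rk Gk β))).det
        + (r : ℝ) * Real.log (Matrix.of (mfun (Qmat Qk Fk β))).det) := by
    filter_upwards [hUopen.mem_nhds hα] with β hβ
    rw [fobj, Matrix.det_kronecker, of_mfun, of_mfun]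
    rw [Real.log_mul (pow_ne_zero _ (hRpos β hβ).det_pos.ne')
      (pow_ne_zero _ (hQpos β hβ).det_pos.ne'), Real.log_pow, Real.log_pow,
      Fintype.card_fin, Fintype.card_fin]
  have hmain := hlog.congr_of_eventuallyEq hev
  refine hmain.congr_fderiv ?_
  symm
  -- CLM equality
  ext v
  rw [gradCLM_apply]
  simp only [ContinuousLinearMap.add_apply, ContinuousLinearMap.smul_apply,
    ContinuousLinearMap.comp_apply, trMulCLM_apply, smul_eq_mul]
  have e1 : Matrix.of (RmatL Rk Gk v) = ∑ k, v k • ((Gk k)ᵀ * Rk k * Gk k) := rfl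
  have e2 : Matrix.of (QmatL Qk Fk α v)
      = ∑ k, (-(α k ^ 2)⁻¹ * v k) • (Fk k * Qk k * (Fk k)ᵀ) := by
    have h2 : QmatL Qk Fk α v
        = ∑ k, (-(α k ^ 2)⁻¹ * v k) • mfun (Fk k * Qk k * (Fk k)ᵀ) := by
      simp [QmatL, ContinuousLinearMap.sum_apply, ContinuousLinearMap.smulRight_apply,
        ContinuousLinearMap.smul_apply, ContinuousLinearMap.proj_apply, smul_smul]
    rw [h2]
    rfl
  rw [e1, e2, trace_mul_sum_smul, trace_mul_sum_smul, Finset.mul_sum, Finset.mul_sum,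
    ← Finset.sum_add_distrib]
  refine Finset.sum_congr rfl fun k _ => ?_
  have hk : α k ≠ 0 := (hα k).ne'
  rw [of_mfun, of_mfun]
  field_simp
  ring

end MMhelp
open MMhelp

/-- `f` is differentiable at every positive `α` with the explicit partial
derivatives `∂f/∂α_k = q tr(R(α)⁻¹ G_kᵀ R_k G_k) − (r/α_k²) tr(Q(α)⁻¹ F_k Q_k F_kᵀ)`;
consequently the gradient of the surrogate `g(·|α⁽ᵗ⁾)` at `α⁽ᵗ⁾` equals `∇f(α⁽ᵗ⁾)`. -/
theorem fobj_hasFDerivAt_and_surrogate_gradient {q r K : ℕ} {qd rd : Fin K → ℕ}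
    (Qk : ∀ k, Matrix (Fin (qd k)) (Fin (qd k)) ℝ)
    (Rk : ∀ k, Matrix (Fin (rd k)) (Fin (rd k)) ℝ)
    (hQk : ∀ k, (Qk k).PosDef) (hRk : ∀ k, (Rk k).PosDef)
    (Fk : ∀ k, Matrix (Fin q) (Fin (qd k)) ℝ)
    (Gk : ∀ k, Matrix (Fin (rd k)) (Fin r) ℝ)
    -- Assumption 1
    (hFk : ∀ k, Fk k ≠ 0) (hGk : ∀ k, Gk k ≠ 0)
    (hF : (Matrix.of fun i (j : (k : Fin K) × Fin (qd k)) => Fk j.1 i j.2 :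
      Matrix (Fin q) ((k : Fin K) × Fin (qd k)) ℝ).rank = q)
    (hG : (Matrix.of fun (j : (k : Fin K) × Fin (rd k)) i => Gk j.1 j.2 i :
      Matrix ((k : Fin K) × Fin (rd k)) (Fin r) ℝ).rank = r)
    (grad : (Fin K → ℝ) → Fin K → ℝ)
    (hgrad : grad = fun α k =>
      (q : ℝ) * ((Rmat Rk Gk α)⁻¹ * ((Gk k)ᵀ * Rk k * Gk k)).trace -
        (r : ℝ) / (α k) ^ 2 * ((Qmat Qk Fk α)⁻¹ * (Fk k * Qk k * (Fk k)ᵀ)).trace)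
    (αt : Fin K → ℝ) (hαt : ∀ k, 0 < αt k)
    (A B : Fin K → ℝ) (CC : ℝ) (g : (Fin K → ℝ) → ℝ)
    (hA : A = fun k => (q : ℝ) * ((Rmat Rk Gk αt)⁻¹ * ((Gk k)ᵀ * Rk k * Gk k)).trace)
    (hB : B = fun k => (r : ℝ) * ((Qmat Qk Fk αt)⁻¹ * (Fk k * Qk k * (Fk k)ᵀ)).trace)
    (hC : CC = fobj Qk Rk Fk Gk αt - 2 * (q : ℝ) * (r : ℝ))
    (hg : g = fun α => (∑ k, (A k * α k + B k / α k)) + CC) :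
    (∀ α : Fin K → ℝ, (∀ k, 0 < α k) →
        HasFDerivAt (fobj Qk Rk Fk Gk) (gradCLM (grad α)) α) ∧
      HasFDerivAt g (gradCLM (grad αt)) αt := by
  constructor
  · intro α hα'
    rw [hgrad]
    exact MMhelp.fobj_deriv Qk Rk hQk hRk Fk Gk hF hG α hα'
  · have h := MMhelp.surrogate_deriv A B CC αt hαt
    have harg : grad αt = fun k => A k - B k / (αt k) ^ 2 := by
      funext k
      simp only [hgrad, hA, hB]
      ring
    rw [hg, harg]
    exact h
end

section
/- Suppose Assumption 1 holds. Let α⁽ᵗ⁾ ∈ S, and let α⁽ᵗ⁺¹⁾ be produced by the MM update: α̃_k := √(B_k/A_k) with A_k := q·tr(R(α⁽ᵗ⁾)⁻¹ G_kᵀ R_k G_k) and B_k := r·tr(Q(α⁽ᵗ⁾)⁻¹ F_k Q_k F_kᵀ), and α⁽ᵗ⁺¹⁾ := (r / tr(R(α̃))) · α̃. Then α⁽ᵗ⁺¹⁾ ∈ S and f(α⁽ᵗ⁺¹⁾) ≤ f(α⁽ᵗ⁾); moreover, if ∇f(α⁽ᵗ⁾) ≠ 0, then f(α⁽ᵗ⁺¹⁾)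 < f(α⁽ᵗ⁾). -/
open Matrix
open scoped Kronecker

namespace MMAux


lemma trace_eq_sum_eigenvalues {n : ℕ} {A : Matrix (Fin n) (Fin n) ℝ} (hA : A.IsHermitian) :
    A.trace = ∑ i, hA.eigenvalues i := by
  simpa using hA.trace_eq_sum_eigenvalues

lemma logdet_le_trace {n : ℕ} {M : Matrix (Fin n) (Fin n) ℝ} (hM : M.PosDef) :
    Real.log M.det ≤ M.trace - n := by
  rw [hM.isHermitian.det_eq_prod_eigenvalues, trace_eq_sum_eigenvalues hM.isHermitian]
  simp only [RCLike.ofReal_real_eq_id, id]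
  have hpos : ∀ i : Fin n, 0 < hM.isHermitian.eigenvalues i := hM.eigenvalues_pos
  have h1 : Real.log (∏ i, (hM.isHermitian.eigenvalues i : ℝ)) =
      ∑ i, Real.log (hM.isHermitian.eigenvalues i) := by
    rw [Real.log_prod]
    intro i _
    exact (hpos i).ne'
  rw [h1]
  have h2 : ∀ i ∈ Finset.univ, Real.log (hM.isHermitian.eigenvalues i) ≤
      hM.isHermitian.eigenvalues i - 1 := fun i _ => Real.log_le_sub_one_of_pos (hpos i)
  calc ∑ i, Real.log (hM.isHermitian.eigenvalues i)
      ≤ ∑ i, (hM.isHermitian.eigenvalues i - 1) := Finset.sum_le_sum h2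
    _ = (∑ i, hM.isHermitian.eigenvalues i) - n := by
        rw [Finset.sum_sub_distrib]
        simp



lemma conjTranspose_eq_transpose {m n : Type*} (A : Matrix m n ℝ) : Aᴴ = Aᵀ := by
  ext i j; simp [Matrix.conjTranspose_apply]

lemma posDef_conj {n : ℕ} {S L : Matrix (Fin n) (Fin n) ℝ} (hS : S.PosDef)
    (hL : L.IsHermitian) (hLdet : IsUnit L.det) : (L * S * L).PosDef := by
  refine Matrix.PosDef.of_dotProduct_mulVec_pos ?_ ?_
  · have : (L * S * L)ᴴ = Lᴴ * Sᴴ * Lᴴ := by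
      rw [Matrix.conjTranspose_mul, Matrix.conjTranspose_mul, Matrix.mul_assoc]
    rw [Matrix.IsHermitian, this, hL, hS.isHermitian]
  · intro x hx
    have hLx : L *ᵥ x ≠ 0 := by
      intro h
      exact hx (Matrix.mulVec_injective_iff_isUnit.mpr (Matrix.isUnit_iff_isUnit_det L |>.2 hLdet)
        |>.eq_iff.mp (by simpa using h))
    have := hS.dotProduct_mulVec_pos hLx
    have hform : star x ⬝ᵥ (L * S * L) *ᵥ x = star (L *ᵥ x) ⬝ᵥ S *ᵥ (L *ᵥ x) := by
      rw [Matrix.star_mulVec, show Lᴴ = L from hL, ← Matrix.mulVec_mulVec, ← Matrix.mulVec_mulVec,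
        Matrix.dotProduct_mulVec (star x)]
    rw [hform]
    exact this

open scoped MatrixOrder in
/-- key log-det inequality : log det S ≤ log det T + tr(T⁻¹ S) - n -/
lemma logdet_ineq {n : ℕ} {S T : Matrix (Fin n) (Fin n) ℝ} (hS : S.PosDef) (hT : T.PosDef) :
    Real.log S.det ≤ Real.log T.det + ((T⁻¹ * S).trace - n) := by
  have hTi : (T⁻¹).PosDef := hT.inv
  set L := CFC.sqrt (T⁻¹) with hLdef
  have hLL : L * L = T⁻¹ := CFC.sqrt_mul_sqrt_self _ (Matrix.nonneg_iff_posSemidef.mpr hTi.posSemidef)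
  have hLherm : L.IsHermitian := (Matrix.nonneg_iff_posSemidef.mp (CFC.sqrt_nonneg _)).1
  have hLdet : IsUnit L.det := by
    have : L.det * L.det = (T⁻¹).det := by rw [← Matrix.det_mul, hLL]
    have hTd : (T⁻¹).det ≠ 0 := by
      rw [Matrix.det_nonsing_inv, Ring.inverse_eq_inv]
      exact inv_ne_zero hT.det_pos.ne'
    have : L.det ≠ 0 := fun h => hTd (by rw [← this, h, mul_zero])
    exact this.isUnit
  have hM : (L * S * L).PosDef := posDef_conj hS hLherm hLdet
  have h1 : Real.log (L * S * L).det ≤ (L * S * L).trace - n := logdet_le_trace hM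
  have htr : (L * S * L).trace = (T⁻¹ * S).trace := by
    rw [Matrix.trace_mul_cycle, hLL]
  have hdet : (L * S * L).det = (T⁻¹).det * S.det := by
    rw [Matrix.det_mul, Matrix.det_mul, mul_comm, ← mul_assoc, ← Matrix.det_mul, hLL]
  rw [hdet, htr] at h1
  have hlog : Real.log ((T⁻¹).det * S.det) = Real.log (T⁻¹).det + Real.log S.det := by
    apply Real.log_mul
    · exact hT.inv.det_pos.ne'
    · exact hS.det_pos.ne'
  rw [hlog] at h1
  have hinvlog : Real.log (T⁻¹).det = - Real.log T.det := by
    rw [Matrix.det_nonsing_inv, Ring.inverse_eq_inv, Real.log_inv]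
  rw [hinvlog] at h1
  linarith

lemma logdet_le_trace' : True := trivial


lemma sum_mulVec {ι : Type*} {n n' : ℕ} (s : Finset ι) (M : ι → Matrix (Fin n) (Fin n') ℝ)
    (x : Fin n' → ℝ) : (∑ k ∈ s, M k) *ᵥ x = ∑ k ∈ s, M k *ᵥ x := by
  ext i
  simp [Matrix.mulVec, dotProduct, Finset.sum_apply, Matrix.sum_apply, Finset.sum_mul]
  rw [Finset.sum_comm]

lemma dotProduct_sum' {ι : Type*} {n : ℕ} (s : Finset ι) (x : Fin n → ℝ) (v : ι → Fin n → ℝ) :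
    x ⬝ᵥ (∑ k ∈ s, v k) = ∑ k ∈ s, x ⬝ᵥ v k := by
  simp [dotProduct, Finset.sum_apply, Finset.mul_sum]
  rw [Finset.sum_comm]

lemma quadform_conj {n m : ℕ} (R : Matrix (Fin m) (Fin m) ℝ) (G : Matrix (Fin m) (Fin n) ℝ)
    (x : Fin n → ℝ) : x ⬝ᵥ (Gᵀ * R * G) *ᵥ x = (G *ᵥ x) ⬝ᵥ R *ᵥ (G *ᵥ x) := by
  rw [← Matrix.mulVec_mulVec, ← Matrix.mulVec_mulVec, Matrix.dotProduct_mulVec x,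
    Matrix.vecMul_transpose]

lemma posDef_weighted_sum {n K : ℕ} {rd : Fin K → ℕ}
    (Rk : ∀ k, Matrix (Fin (rd k)) (Fin (rd k)) ℝ) (hRk : ∀ k, (Rk k).PosDef)
    (Gk : ∀ k, Matrix (Fin (rd k)) (Fin n) ℝ) (c : Fin K → ℝ) (hc : ∀ k, 0 < c k)
    (hker : ∀ x : Fin n → ℝ, (∀ k, Gk k *ᵥ x = 0) → x = 0) :
    (∑ k, c k • ((Gk k)ᵀ * Rk k * Gk k)).PosDef := by
  have hpsd : ∀ k, ((Gk k)ᵀ * Rk k * Gk k).PosSemidef := by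
    intro k
    have h := (hRk k).posSemidef.mul_mul_conjTranspose_same (Gk k)ᵀ
    have : ((Gk k)ᵀ)ᴴ = Gk k := by ext i j; simp [Matrix.conjTranspose_apply]
    rwa [this] at h
  refine Matrix.PosDef.of_dotProduct_mulVec_pos ?_ ?_
  · show (∑ k, c k • ((Gk k)ᵀ * Rk k * Gk k))ᴴ = _
    rw [Matrix.conjTranspose_sum]
    refine Finset.sum_congr rfl fun k _ => ?_
    rw [Matrix.conjTranspose_smul, (hpsd k).1]
    simp
  · intro x hx
    have hxs : star x = x := by simp
    rw [hxs, sum_mulVec, dotProduct_sum']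
    have hterm : ∀ k, x ⬝ᵥ (c k • ((Gk k)ᵀ * Rk k * Gk k)) *ᵥ x
        = c k * ((Gk k *ᵥ x) ⬝ᵥ Rk k *ᵥ (Gk k *ᵥ x)) := by
      intro k
      rw [Matrix.smul_mulVec, dotProduct_smul, smul_eq_mul, quadform_conj]
    have hnonneg : ∀ k ∈ Finset.univ, (0:ℝ) ≤ x ⬝ᵥ (c k • ((Gk k)ᵀ * Rk k * Gk k)) *ᵥ x := by
      intro k _
      rw [hterm k]
      have h2 := (hRk k).posSemidef.dotProduct_mulVec_nonneg (Gk k *ᵥ x)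
      rw [show star (Gk k *ᵥ x) = Gk k *ᵥ x by simp] at h2
      exact mul_nonneg (hc k).le h2
    have hex : ∃ k, Gk k *ᵥ x ≠ 0 := by
      by_contra h
      push_neg at h
      exact hx (hker x h)
    obtain ⟨k0, hk0⟩ := hex
    have hposk : 0 < x ⬝ᵥ (c k0 • ((Gk k0)ᵀ * Rk k0 * Gk k0)) *ᵥ x := by
      rw [hterm k0]
      have h2 := (hRk k0).dotProduct_mulVec_pos hk0
      rw [show star (Gk k0 *ᵥ x) = Gk k0 *ᵥ x by simp] at h2
      exact mul_pos (hc k0) h2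
    exact Finset.sum_pos' hnonneg ⟨k0, Finset.mem_univ _, hposk⟩

lemma posDef_trace_pos {n : ℕ} (hn : 0 < n) {M : Matrix (Fin n) (Fin n) ℝ} (hM : M.PosDef) :
    0 < M.trace := by
  have h : ∀ i, 0 < M i i := by
    intro i
    have := hM.dotProduct_mulVec_pos (x := Pi.single i 1) (by
      intro hc
      have := congrFun hc i
      simp at this)
    simp only [star_trivial, Matrix.mulVec_single, mul_one] at this
    simpa [single_dotProduct] using this
  exact Finset.sum_pos (fun i _ => h i) ⟨⟨0, hn⟩, Finset.mem_univ _⟩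

open scoped MatrixOrder in
lemma trace_mul_psd_pos {n : ℕ} {P N : Matrix (Fin n) (Fin n) ℝ} (hP : P.PosDef)
    (hN : N.PosSemidef) (hN0 : N ≠ 0) : 0 < (P * N).trace := by
  obtain ⟨C, hC⟩ : ∃ C : Matrix (Fin n) (Fin n) ℝ, N = Cᴴ * C :=
    CStarAlgebra.nonneg_iff_eq_star_mul_self.mp (Matrix.nonneg_iff_posSemidef.mpr hN)
  have hC0 : C ≠ 0 := by
    rintro rfl
    apply hN0
    rw [hC]
    simp
  have h1 : (P * N).trace = (C * P * Cᴴ).trace := by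
    rw [hC, ← Matrix.mul_assoc, Matrix.trace_mul_cycle]
  have hdiag : ∀ i, (C * P * Cᴴ) i i = (fun j => C i j) ⬝ᵥ P *ᵥ (fun j => C i j) := by
    intro i
    rw [Matrix.dotProduct_mulVec]
    simp [Matrix.mul_apply, Matrix.conjTranspose_apply, dotProduct, Matrix.vecMul,
      Finset.sum_mul, Finset.mul_sum]
  obtain ⟨i0, j0, hij⟩ : ∃ i j, C i j ≠ 0 := by
    by_contra h
    push_neg at h
    exact hC0 (by ext i j; exact h i j)
  rw [h1, Matrix.trace]
  apply Finset.sum_pos'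
  · intro i _
    rw [Matrix.diag_apply, hdiag i]
    have := hP.posSemidef.dotProduct_mulVec_nonneg (fun j => C i j)
    rwa [show star (fun j => C i j) = fun j => C i j by simp] at this
  · refine ⟨i0, Finset.mem_univ _, ?_⟩
    rw [Matrix.diag_apply, hdiag i0]
    have hrow : (fun j => C i0 j) ≠ 0 := by
      intro h
      exact hij (congrFun h j0)
    have := hP.dotProduct_mulVec_pos hrow
    rwa [show star (fun j => C i0 j) = fun j => C i0 j by simp] at this


lemma diffAt_det {E : Type*} [NormedAddCommGroup E] [NormedSpace ℝ E] {n : Type*}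
    [Fintype n] [DecidableEq n] {f : E → Matrix n n ℝ} {x : E}
    (hf : ∀ i j, DifferentiableAt ℝ (fun y => f y i j) x) :
    DifferentiableAt ℝ (fun y => (f y).det) x := by
  simp only [Matrix.det_apply']
  apply DifferentiableAt.fun_sum
  intro σ _
  apply DifferentiableAt.const_mul
  exact (HasFDerivAt.finset_prod (fun i _ => (hf (σ i) i).hasFDerivAt)).differentiableAt

lemma full_rank_ker {m : Type*} [Fintype m] {n : ℕ} {M : Matrix m (Fin n) ℝ}
    (h : M.rank = n) : ∀ x : Fin n → ℝ, M *ᵥ x = 0 → x = 0 := by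
  have h1 := LinearMap.finrank_range_add_finrank_ker M.mulVecLin
  have hfin : Module.finrank ℝ (Fin n → ℝ) = n := by
    simp [Module.finrank_fintype_fun_eq_card]
  rw [hfin] at h1
  have hrank : Module.finrank ℝ (LinearMap.range M.mulVecLin) = n := h
  have h2 : Module.finrank ℝ (LinearMap.ker M.mulVecLin) = 0 := by omega
  have h3 : LinearMap.ker M.mulVecLin = ⊥ := Submodule.finrank_eq_zero.mp h2
  intro x hx
  have hmem : x ∈ LinearMap.ker M.mulVecLin := by
    rw [LinearMap.mem_ker, Matrix.mulVecLin_apply]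
    exact hx
  rw [h3] at hmem
  simpa using hmem

lemma amgm {A B x y : ℝ} (hA : 0 < A) (hB : 0 < B) (hx : 0 < x)
    (hy : y = Real.sqrt (B / A)) :
    A * y + B / y ≤ A * x + B / x ∧ (x ≠ y → A * y + B / y < A * x + B / x) := by
  have hy0 : 0 < y := hy ▸ Real.sqrt_pos.mpr (div_pos hB hA)
  have hy2 : y ^ 2 = B / A := by rw [hy]; exact Real.sq_sqrt (div_pos hB hA).le
  have hBy : B = A * y ^ 2 := by
    field_simp at hy2
    linarith
  have key : A * x + B / x - (A * y + B / y) = A * (x - y) ^ 2 / x := by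
    rw [hBy]
    field_simp
    ring
  constructor
  · have h1 : 0 ≤ A * (x - y) ^ 2 / x := div_nonneg (mul_nonneg hA.le (sq_nonneg _)) hx.le
    linarith
  · intro hne
    have hne' : x - y ≠ 0 := sub_ne_zero.mpr hne
    have hsq : 0 < (x - y) ^ 2 := lt_of_le_of_ne (sq_nonneg _) (Ne.symm (pow_ne_zero 2 hne'))
    have h1 : 0 < A * (x - y) ^ 2 / x := div_pos (mul_pos hA hsq) hx
    linarith


lemma conj_posSemidef {m n : ℕ} {R : Matrix (Fin m) (Fin m) ℝ} (hR : R.PosSemidef)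
    (G : Matrix (Fin m) (Fin n) ℝ) : (Gᵀ * R * G).PosSemidef := by
  have h := hR.mul_mul_conjTranspose_same Gᵀ
  rwa [show (Gᵀ)ᴴ = G by ext i j; simp [Matrix.conjTranspose_apply]] at h

lemma conj_ne_zero {m n : ℕ} {R : Matrix (Fin m) (Fin m) ℝ} (hR : R.PosDef)
    {G : Matrix (Fin m) (Fin n) ℝ} (hG : G ≠ 0) : Gᵀ * R * G ≠ 0 := by
  intro h0
  apply hG
  ext s j
  have hform : (Pi.single j 1) ⬝ᵥ (Gᵀ * R * G) *ᵥ (Pi.single j (1:ℝ)) = 0 := by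
    rw [h0]
    simp
  rw [quadform_conj] at hform
  have hv : G *ᵥ Pi.single j 1 = 0 := by
    by_contra hv
    have h2 := hR.dotProduct_mulVec_pos hv
    rw [star_trivial] at h2
    exact h2.ne' hform
  have h3 := congrFun hv s
  simpa [Matrix.mulVec_single] using h3

end MMAux

open MMAux

set_option maxHeartbeats 1000000 in
/-- Lemma 3: the MM update stays in `S` and monotonically decreases `f`;
the decrease is strict whenever `∇f(α⁽ᵗ⁾) ≠ 0`. -/
theorem mm_update_decreases {q r K : ℕ} {qd rd : Fin K → ℕ}
    (Qk : ∀ k, Matrix (Fin (qd k)) (Fin (qd k)) ℝ)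
    (Rk : ∀ k, Matrix (Fin (rd k)) (Fin (rd k)) ℝ)
    (hQk : ∀ k, (Qk k).PosDef) (hRk : ∀ k, (Rk k).PosDef)
    (Fk : ∀ k, Matrix (Fin q) (Fin (qd k)) ℝ)
    (Gk : ∀ k, Matrix (Fin (rd k)) (Fin r) ℝ)
    -- Assumption 1
    (hFk : ∀ k, Fk k ≠ 0) (hGk : ∀ k, Gk k ≠ 0)
    (hF : (Matrix.of fun i (j : (k : Fin K) × Fin (qd k)) => Fk j.1 i j.2 :
      Matrix (Fin q) ((k : Fin K) × Fin (qd k)) ℝ).rank = q)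
    (hG : (Matrix.of fun (j : (k : Fin K) × Fin (rd k)) i => Gk j.1 j.2 i :
      Matrix ((k : Fin K) × Fin (rd k)) (Fin r) ℝ).rank = r)
    (αt : Fin K → ℝ) (hαt : αt ∈ feasibleS Rk Gk)
    (A B αtilde αnext : Fin K → ℝ)
    (hA : A = fun k => (q : ℝ) * ((Rmat Rk Gk αt)⁻¹ * ((Gk k)ᵀ * Rk k * Gk k)).trace)
    (hB : B = fun k => (r : ℝ) * ((Qmat Qk Fk αt)⁻¹ * (Fk k * Qk k * (Fk k)ᵀ)).trace)
    (hαtilde : αtilde = fun k => Real.sqrt (B k / A k))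
    (hαnext : αnext = ((r : ℝ) / (Rmat Rk Gk αtilde).trace) • αtilde) :
    αnext ∈ feasibleS Rk Gk ∧
      fobj Qk Rk Fk Gk αnext ≤ fobj Qk Rk Fk Gk αt ∧
      (fderiv ℝ (fobj Qk Rk Fk Gk) αt ≠ 0 →
        fobj Qk Rk Fk Gk αnext < fobj Qk Rk Fk Gk αt) := by
  classical
  obtain ⟨hαpos, hαtr⟩ := hαt
  rcases Nat.eq_zero_or_pos K with hK | hK
  · -- degenerate case K = 0
    subst hK
    have hr : (r : ℝ) = 0 := by
      rw [← hαtr]; simp [Rmat]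
    have hr0 : r = 0 := by exact_mod_cast hr
    subst hr0
    have hconst : ∀ β : Fin 0 → ℝ, fobj Qk Rk Fk Gk β = 0 := by
      intro β
      unfold fobj
      rw [Matrix.det_isEmpty, Real.log_one]
    refine ⟨⟨fun k => k.elim0, by simp [Rmat]⟩, le_of_eq (by rw [hconst, hconst]), ?_⟩
    intro hgrad
    exfalso
    apply hgrad
    have heq : fobj Qk Rk Fk Gk = fun _ => (0:ℝ) := funext hconst
    rw [heq]
    exact fderiv_const_apply (0:ℝ)
  -- main case K > 0
  have hKne : Nonempty (Fin K) := ⟨⟨0, hK⟩⟩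
  have hq : 0 < q := by
    rcases Nat.eq_zero_or_pos q with h0 | h; swap; · exact h
    exfalso
    apply hFk ⟨0, hK⟩
    subst h0
    ext i j
    exact i.elim0
  have hr : 0 < r := by
    rcases Nat.eq_zero_or_pos r with h0 | h; swap; · exact h
    exfalso
    apply hGk ⟨0, hK⟩
    subst h0
    ext i j
    exact j.elim0
  -- kernel conditions from full rank
  have hkerG : ∀ x : Fin r → ℝ, (∀ k, Gk k *ᵥ x = 0) → x = 0 := by
    intro x hx
    apply MMAux.full_rank_ker hG x
    funext j
    obtain ⟨k, s⟩ := j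
    have := congrFun (hx k) s
    simpa [Matrix.mulVec, dotProduct] using this
  have hkerF : ∀ x : Fin q → ℝ, (∀ k, (Fk k)ᵀ *ᵥ x = 0) → x = 0 := by
    intro x hx
    have hrT : (Matrix.of fun i (j : (k : Fin K) × Fin (qd k)) => Fk j.1 i j.2 :
        Matrix (Fin q) ((k : Fin K) × Fin (qd k)) ℝ)ᵀ.rank = q := by
      rw [Matrix.rank_transpose]; exact hF
    apply MMAux.full_rank_ker hrT x
    funext j
    obtain ⟨k, s⟩ := j
    have := congrFun (hx k) s
    simpa [Matrix.mulVec, dotProduct, Matrix.transpose_apply] using this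
  -- positive definiteness
  have hRpos : ∀ β : Fin K → ℝ, (∀ k, 0 < β k) → (Rmat Rk Gk β).PosDef := by
    intro β hβ
    exact MMAux.posDef_weighted_sum Rk hRk Gk β hβ hkerG
  have hQpos : ∀ β : Fin K → ℝ, (∀ k, 0 < β k) → (Qmat Qk Fk β).PosDef := by
    intro β hβ
    have h := MMAux.posDef_weighted_sum Qk hQk (fun k => (Fk k)ᵀ) (fun k => (β k)⁻¹)
      (fun k => inv_pos.mpr (hβ k)) hkerF
    simpa [Qmat, Matrix.transpose_transpose] using h
  have hT : (Rmat Rk Gk αt).PosDef := hRpos αt hαpos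
  have hP : (Qmat Qk Fk αt).PosDef := hQpos αt hαpos
  -- positivity of A and B
  have hApos : ∀ k, 0 < A k := by
    intro k
    rw [hA]
    refine mul_pos (by exact_mod_cast hq) ?_
    exact MMAux.trace_mul_psd_pos hT.inv
      (MMAux.conj_posSemidef (hRk k).posSemidef (Gk k))
      (MMAux.conj_ne_zero (hRk k) (hGk k))
  have hBpos : ∀ k, 0 < B k := by
    intro k
    rw [hB]
    refine mul_pos (by exact_mod_cast hr) ?_
    have h1 : Fk k * Qk k * (Fk k)ᵀ = ((Fk k)ᵀ)ᵀ * Qk k * (Fk k)ᵀ := by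
      rw [Matrix.transpose_transpose]
    rw [h1]
    exact MMAux.trace_mul_psd_pos hP.inv
      (MMAux.conj_posSemidef (hQk k).posSemidef (Fk k)ᵀ)
      (MMAux.conj_ne_zero (hQk k) (by
        intro h0
        exact hFk k (by rwa [Matrix.transpose_eq_zero] at h0)))
  have hαtildepos : ∀ k, 0 < αtilde k := by
    intro k
    rw [hαtilde]
    exact Real.sqrt_pos.mpr (div_pos (hBpos k) (hApos k))
  -- surrogate function
  set g : (Fin K → ℝ) → ℝ := fun β => ∑ k, (A k * β k + B k * (β k)⁻¹) with hgdef
  -- trace identities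
  have htraceR : ∀ β : Fin K → ℝ,
      (q : ℝ) * (((Rmat Rk Gk αt)⁻¹ * Rmat Rk Gk β).trace) = ∑ k, A k * β k := by
    intro β
    rw [hA]
    unfold Rmat
    rw [Matrix.mul_sum, Matrix.trace_sum, Finset.mul_sum]
    refine Finset.sum_congr rfl fun k _ => ?_
    rw [Matrix.mul_smul, Matrix.trace_smul, smul_eq_mul]
    ring
  have htraceQ : ∀ β : Fin K → ℝ,
      (r : ℝ) * (((Qmat Qk Fk αt)⁻¹ * Qmat Qk Fk β).trace) = ∑ k, B k * (β k)⁻¹ := by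
    intro β
    rw [hB]
    unfold Qmat
    rw [Matrix.mul_sum, Matrix.trace_sum, Finset.mul_sum]
    refine Finset.sum_congr rfl fun k _ => ?_
    rw [Matrix.mul_smul, Matrix.trace_smul, smul_eq_mul]
    ring
  have hTinv : (Rmat Rk Gk αt)⁻¹ * Rmat Rk Gk αt = 1 :=
    Matrix.nonsing_inv_mul _ hT.det_pos.ne'.isUnit
  have hPinv : (Qmat Qk Fk αt)⁻¹ * Qmat Qk Fk αt = 1 :=
    Matrix.nonsing_inv_mul _ hP.det_pos.ne'.isUnit
  have hsumA : ∑ k, A k * αt k = (q : ℝ) * r := by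
    rw [← htraceR αt, hTinv, Matrix.trace_one]
    simp
  have hsumB : ∑ k, B k * (αt k)⁻¹ = (r : ℝ) * q := by
    rw [← htraceQ αt, hPinv, Matrix.trace_one]
    simp
  -- log-det split
  have hsplit : ∀ β : Fin K → ℝ, (∀ k, 0 < β k) → fobj Qk Rk Fk Gk β =
      (q : ℝ) * Real.log (Rmat Rk Gk β).det + (r : ℝ) * Real.log (Qmat Qk Fk β).det := by
    intro β hβ
    unfold fobj
    rw [Matrix.det_kronecker, Real.log_mul (pow_ne_zero _ (hRpos β hβ).det_pos.ne')
      (pow_ne_zero _ (hQpos β hβ).det_pos.ne'), Real.log_pow, Real.log_pow]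
    simp
  -- key majorization inequality
  have hkey : ∀ β : Fin K → ℝ, (∀ k, 0 < β k) →
      fobj Qk Rk Fk Gk β ≤ fobj Qk Rk Fk Gk αt + (g β - g αt) := by
    intro β hβ
    have i1 := MMAux.logdet_ineq (hRpos β hβ) hT
    have i2 := MMAux.logdet_ineq (hQpos β hβ) hP
    have i1' := mul_le_mul_of_nonneg_left i1 (by positivity : (0:ℝ) ≤ (q:ℝ))
    have i2' := mul_le_mul_of_nonneg_left i2 (by positivity : (0:ℝ) ≤ (r:ℝ))
    have t1 := htraceR β
    have t2 := htraceQ β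
    have e1 := hsplit β hβ
    have e2 := hsplit αt hαpos
    have hg1 : g β = ∑ k, A k * β k + ∑ k, B k * (β k)⁻¹ := Finset.sum_add_distrib
    have hg2 : g αt = ∑ k, A k * αt k + ∑ k, B k * (αt k)⁻¹ := Finset.sum_add_distrib
    rw [e1, e2, hg1, hg2, hsumA, hsumB]
    nlinarith [i1', i2', t1, t2]
  -- the AM-GM step
  have hterm : ∀ k, A k * αtilde k + B k * (αtilde k)⁻¹ ≤ A k * αt k + B k * (αt k)⁻¹ ∧
      (αt k ≠ αtilde k → A k * αtilde k + B k * (αtilde k)⁻¹ < A k * αt k + B k * (αt k)⁻¹) := by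
    intro k
    have h := MMAux.amgm (hApos k) (hBpos k) (hαpos k) (congrFun hαtilde k)
    rw [div_eq_mul_inv, div_eq_mul_inv] at h
    exact h
  have hgle : g αtilde ≤ g αt := by
    rw [hgdef]
    exact Finset.sum_le_sum fun k _ => (hterm k).1
  have hmono : fobj Qk Rk Fk Gk αtilde ≤ fobj Qk Rk Fk Gk αt := by
    have := hkey αtilde hαtildepos
    linarith
  -- scale invariance
  have htrtilde : 0 < (Rmat Rk Gk αtilde).trace :=
    MMAux.posDef_trace_pos hr (hRpos αtilde hαtildepos)
  have hc : 0 < (r : ℝ) / (Rmat Rk Gk αtilde).trace :=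
    div_pos (by exact_mod_cast hr) htrtilde
  set c : ℝ := (r : ℝ) / (Rmat Rk Gk αtilde).trace with hcdef
  have hRs : ∀ β : Fin K → ℝ, Rmat Rk Gk (c • β) = c • Rmat Rk Gk β := by
    intro β
    unfold Rmat
    rw [Finset.smul_sum]
    refine Finset.sum_congr rfl fun k _ => ?_
    rw [Pi.smul_apply, smul_eq_mul, smul_smul]
  have hQs : ∀ β : Fin K → ℝ, Qmat Qk Fk (c • β) = c⁻¹ • Qmat Qk Fk β := by
    intro β
    unfold Qmat
    rw [Finset.smul_sum]
    refine Finset.sum_congr rfl fun k _ => ?_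
    rw [Pi.smul_apply, smul_eq_mul, mul_inv, smul_smul]
  have hscale : fobj Qk Rk Fk Gk αnext = fobj Qk Rk Fk Gk αtilde := by
    rw [hαnext]
    unfold fobj
    rw [hRs, hQs, Matrix.smul_kronecker, Matrix.kronecker_smul, smul_smul,
      mul_inv_cancel₀ hc.ne', one_smul]
  have hnextpos : ∀ k, 0 < αnext k := by
    intro k
    rw [hαnext]
    exact mul_pos hc (hαtildepos k)
  have hnexttr : (Rmat Rk Gk αnext).trace = (r : ℝ) := by
    rw [hαnext, hRs, Matrix.trace_smul, smul_eq_mul, hcdef]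
    field_simp
  refine ⟨⟨hnextpos, hnexttr⟩, by rw [hscale]; exact hmono, ?_⟩
  -- strict decrease
  intro hgrad
  by_cases hne : ∃ k, αt k ≠ αtilde k
  · obtain ⟨k0, hk0⟩ := hne
    have hglt : g αtilde < g αt := by
      rw [hgdef]
      exact Finset.sum_lt_sum (fun k _ => (hterm k).1)
        ⟨k0, Finset.mem_univ _, (hterm k0).2 hk0⟩
    have := hkey αtilde hαtildepos
    rw [hscale]
    linarith
  · exfalso
    apply hgrad
    push_neg at hne
    -- g has derivative 0 at αt
    have hg0 : HasFDerivAt g (0 : (Fin K → ℝ) →L[ℝ] ℝ) αt := by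
      have hsum : HasFDerivAt g (∑ k : Fin K, (0 : (Fin K → ℝ) →L[ℝ] ℝ)) αt := by
        apply HasFDerivAt.fun_sum
        intro k _
        have hd1 : HasDerivAt (fun y : ℝ => A k * y + B k * y⁻¹)
            (A k * 1 + B k * (-(((αt k) ^ 2)⁻¹))) (αt k) := by
          exact ((hasDerivAt_id (αt k)).const_mul (A k)).add
            (((hasDerivAt_inv (hαpos k).ne')).const_mul (B k))
        have hcoeff : A k * 1 + B k * (-(((αt k) ^ 2)⁻¹)) = 0 := by
          have h1 : αt k = Real.sqrt (B k / A k) := by rw [hne k, hαtilde]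
          have h2 : (αt k) ^ 2 = B k / A k := by
            rw [h1]; exact Real.sq_sqrt (div_pos (hBpos k) (hApos k)).le
          have h3 : B k = A k * (αt k) ^ 2 := by
            rw [h2, mul_comm, div_mul_cancel₀ _ (hApos k).ne']
          have h4 : (αt k) ^ 2 ≠ 0 := pow_ne_zero 2 (hαpos k).ne'
          rw [h3, mul_neg, mul_assoc, mul_inv_cancel₀ h4]; ring
        have hproj : HasFDerivAt (fun β : Fin K → ℝ => β k)
            (ContinuousLinearMap.proj k : (Fin K → ℝ) →L[ℝ] ℝ) αt :=
          (ContinuousLinearMap.proj (R := ℝ) (φ := fun _ : Fin K => ℝ) k).hasFDerivAt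
        have hcomp := hd1.comp_hasFDerivAt αt hproj
        rw [hcoeff] at hcomp
        simpa [Function.comp_def] using hcomp
      simpa using hsum
    -- differentiability of fobj at αt
    have hRe : ∀ (i j : Fin r), DifferentiableAt ℝ (fun β => Rmat Rk Gk β i j) αt := by
      intro i j
      have : (fun β : Fin K → ℝ => Rmat Rk Gk β i j)
          = fun β => ∑ k, β k * ((Gk k)ᵀ * Rk k * Gk k) i j := by
        funext β
        simp [Rmat, Matrix.sum_apply]
      rw [this]
      exact DifferentiableAt.fun_sum fun k _ =>
        ((ContinuousLinearMap.proj k : (Fin K → ℝ) →L[ℝ] ℝ).differentiableAt).mul_const _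
    have hQe : ∀ (i j : Fin q), DifferentiableAt ℝ (fun β => Qmat Qk Fk β i j) αt := by
      intro i j
      have : (fun β : Fin K → ℝ => Qmat Qk Fk β i j)
          = fun β => ∑ k, (β k)⁻¹ * (Fk k * Qk k * (Fk k)ᵀ) i j := by
        funext β
        simp [Qmat, Matrix.sum_apply]
      rw [this]
      refine DifferentiableAt.fun_sum fun k _ => DifferentiableAt.mul_const ?_ _
      exact ((ContinuousLinearMap.proj k :
        (Fin K → ℝ) →L[ℝ] ℝ).differentiableAt).inv (hαpos k).ne'
    have hdet : DifferentiableAt ℝ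
        (fun β => (Rmat Rk Gk β ⊗ₖ Qmat Qk Fk β).det) αt := by
      apply MMAux.diffAt_det
      rintro ⟨i1, i2⟩ ⟨j1, j2⟩
      have : (fun β : Fin K → ℝ => (Rmat Rk Gk β ⊗ₖ Qmat Qk Fk β) (i1, i2) (j1, j2))
          = fun β => Rmat Rk Gk β i1 j1 * Qmat Qk Fk β i2 j2 := by
        funext β
        simp [Matrix.kroneckerMap_apply]
      rw [this]
      exact (hRe i1 j1).mul (hQe i2 j2)
    have hdetne : (Rmat Rk Gk αt ⊗ₖ Qmat Qk Fk αt).det ≠ 0 := by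
      rw [Matrix.det_kronecker]
      exact (mul_pos (pow_pos hT.det_pos (Fintype.card (Fin q)))
        (pow_pos hP.det_pos (Fintype.card (Fin r)))).ne'
    have hfdiff : DifferentiableAt ℝ (fobj Qk Rk Fk Gk) αt := by
      have : fobj Qk Rk Fk Gk = fun β => Real.log ((Rmat Rk Gk β ⊗ₖ Qmat Qk Fk β).det) := rfl
      rw [this]
      exact hdet.log hdetne
    have hgdiff : DifferentiableAt ℝ g αt := hg0.differentiableAt
    -- local max of fobj - g at αt
    have hopen : IsOpen {β : Fin K → ℝ | ∀ k, 0 < β k} := by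
      have : {β : Fin K → ℝ | ∀ k, 0 < β k} = ⋂ k, {β : Fin K → ℝ | 0 < β k} := by
        ext β
        simp [Set.mem_iInter]
      rw [this]
      exact isOpen_iInter_of_finite fun k => isOpen_lt continuous_const (continuous_apply k)
    have hlocmax : IsLocalMax (fun β => fobj Qk Rk Fk Gk β - g β) αt := by
      refine Filter.eventually_of_mem (hopen.mem_nhds hαpos) ?_
      intro β hβ
      have h := hkey β hβ
      show fobj Qk Rk Fk Gk β - g β ≤ fobj Qk Rk Fk Gk αt - g αt
      linarith
    have hφ : fderiv ℝ (fun β => fobj Qk Rk Fk Gk β - g β) αt = 0 :=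
      hlocmax.fderiv_eq_zero
    have heq : fobj Qk Rk Fk Gk = fun β => (fobj Qk Rk Fk Gk β - g β) + g β := by
      funext β
      ring
    rw [heq, fderiv_fun_add (f := fun β => fobj Qk Rk Fk Gk β - g β) (hfdiff.sub hgdiff) hgdiff, hφ, hg0.fderiv]
    simp
end
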